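/- arXiv:2601.18430 — 6 statements merged into one kernel-verified Lean document; each statement's English description precedes it below -/
import Mathlib

section
/- Let (W, 𝔄, μ) be a σ-finite measure space and C₁ ≥ 0. Let (v_k)_{k∈ℕ} ⊆ L²(μ) with ‖v_k‖_{L²(μ)} ≤ C₁ for all k, let (χ_k)_{k∈ℕ} be measurable functions on W with 0 ≤ χ_k ≤ 1 and χ_k v_k = v_k μ-a.e., and let θ : W → [0,1] be measurable. Assume v_k converges weakly in L²(μ) to some ṽ, and that ∫_W χ_k g dμ → ∫_W θ g dμ for every g ∈ L¹(μ). Then there exists a measurable function u : W → ℝ such that ṽ = θ·u μ-a.e. and ∫_W θ u² dμ ≤ C₁². -/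
/-! Passing to the limit in `∫ v_k w = ∫ v_k (χ_k w) ≤ C₁ (∫ χ_k w²)^{1/2}` (Cauchy–Schwarz and
`χ_k² ≤ χ_k`) gives `∫ ṽ w ≤ C₁ (∫ θ w²)^{1/2}` for every `w ∈ L²(μ)`. Testing with
`w = 1_{θ = 0} ṽ` shows that `ṽ` vanishes where `θ` does, so `ṽ = θ u` with `u = ṽ / θ`. Testing
with `w = 1_{θ ≥ ε} u` gives `I ≤ C₁ √I` for `I = ∫_{θ ≥ ε} θ u²`, hence `I ≤ C₁²`, and
monotone convergence as `ε → 0` concludes. -/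

open MeasureTheory Set Filter

section

variable {W : Type*} [MeasurableSpace W] {μ : Measure W} {f θ : W → ℝ} {C : ℝ}

theorem integral_mul_le_eLpNorm_mul_sqrt_integral_sq {g : W → ℝ}
    (hf : MemLp f 2 μ) (hg : MemLp g 2 μ) :
    ∫ x, f x * g x ∂μ ≤ (eLpNorm f 2 μ).toReal * √(∫ x, g x ^ 2 ∂μ) := by
  have h_inner : ∫ x, f x * g x ∂μ = inner ℝ (hf.toLp f) (hg.toLp g) := by
    rw [L2.inner_def]
    refine integral_congr_ae ?_
    filter_upwards [hf.coeFn_toLp, hg.coeFn_toLp] with x hFx hGx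
    simp [hFx, hGx, mul_comm]
  have h_norm : ‖hg.toLp g‖ = √(∫ x, g x ^ 2 ∂μ) := by
    rw [← Real.sqrt_sq (norm_nonneg _), ← real_inner_self_eq_norm_sq, L2.inner_def]
    congr 1
    refine integral_congr_ae ?_
    filter_upwards [hg.coeFn_toLp] with x hGx
    simp [hGx, sq]
  rw [h_inner, ← Lp.norm_toLp f hf, ← h_norm]
  exact real_inner_le_norm _ _

theorem integral_mul_le_eLpNorm_mul_sqrt_integral_cutoff {v χ w : W → ℝ}
    (hv : MemLp v 2 μ) (hw : MemLp w 2 μ) (hχm : Measurable χ) (hχ : ∀ x, χ x ∈ Icc (0 : ℝ) 1)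
    (hχv : (fun x => χ x * v x) =ᵐ[μ] v) :
    ∫ x, v x * w x ∂μ ≤ (eLpNorm v 2 μ).toReal * √(∫ x, χ x * w x ^ 2 ∂μ) := by
  have hχ_norm : ∀ x, ‖χ x‖ ≤ 1 := fun x => by
    rw [Real.norm_eq_abs, abs_of_nonneg (hχ x).1]; exact (hχ x).2
  have hχw : MemLp (fun x => χ x * w x) 2 μ :=
    hw.of_le (hχm.aestronglyMeasurable.mul hw.1) (ae_of_all _ fun x => by
      rw [norm_mul]; exact mul_le_of_le_one_left (norm_nonneg _) (hχ_norm x))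
  have h_shift : ∫ x, v x * w x ∂μ = ∫ x, v x * (χ x * w x) ∂μ := by
    refine integral_congr_ae ?_
    filter_upwards [hχv] with x hx
    nth_rewrite 1 [← hx]; ring
  have h_sq : ∫ x, (χ x * w x) ^ 2 ∂μ ≤ ∫ x, χ x * w x ^ 2 ∂μ := by
    refine integral_mono hχw.integrable_sq
      (hw.integrable_sq.bdd_mul hχm.aestronglyMeasurable (ae_of_all _ hχ_norm)) fun x => ?_
    have : χ x ^ 2 ≤ χ x := pow_le_of_le_one (hχ x).1 (hχ x).2 two_ne_zero
    calc (χ x * w x) ^ 2 = χ x ^ 2 * w x ^ 2 := by ring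
      _ ≤ χ x * w x ^ 2 := by gcongr
  rw [h_shift]
  calc ∫ x, v x * (χ x * w x) ∂μ
      ≤ (eLpNorm v 2 μ).toReal * √(∫ x, (χ x * w x) ^ 2 ∂μ) :=
        integral_mul_le_eLpNorm_mul_sqrt_integral_sq hv hχw
    _ ≤ (eLpNorm v 2 μ).toReal * √(∫ x, χ x * w x ^ 2 ∂μ) := by gcongr

theorem exists_measurable_ae_eq_mul (hf : AEMeasurable f μ) (hθm : Measurable θ)
    (hfθ : ∀ᵐ x ∂μ, θ x = 0 → f x = 0) :
    ∃ u : W → ℝ, Measurable u ∧ f =ᵐ[μ] fun x => θ x * u x := by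
  refine ⟨fun x => hf.mk f x / θ x, hf.measurable_mk.div hθm, ?_⟩
  filter_upwards [hf.ae_eq_mk, hfθ] with x hx hx0
  by_cases hθx : θ x = 0
  · simp [hθx, hx0 hθx]
  · rw [hx, mul_div_cancel₀ _ hθx]

/-- `w ↦ ∫ f w` is bounded by `C` in the norm of `L²(θ μ)`. -/
def IntegralMulLeWeightedNorm (μ : Measure W) (f θ : W → ℝ) (C : ℝ) : Prop :=
  ∀ w : W → ℝ, MemLp w 2 μ → ∫ x, f x * w x ∂μ ≤ C * √(∫ x, θ x * w x ^ 2 ∂μ)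

theorem IntegralMulLeWeightedNorm.ae_eq_zero_of_eq_zero (hθm : Measurable θ)
    (hf : MemLp f 2 μ) (hC : IntegralMulLeWeightedNorm μ f θ C) :
    ∀ᵐ x ∂μ, θ x = 0 → f x = 0 := by
  set S : Set W := {x | θ x = 0}
  have hS : MeasurableSet S := hθm (measurableSet_singleton 0)
  set g : W → ℝ := S.indicator f
  have hg : MemLp g 2 μ := hf.indicator hS
  have h_weight : ∀ x, θ x * g x ^ 2 = 0 := fun x => by
    by_cases hx : x ∈ S
    · simp [show θ x = 0 from hx]
    · simp [g, hx]
  have h_prod : (fun x => f x * g x) = fun x => g x ^ 2 := funext fun x => by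
    by_cases hx : x ∈ S <;> simp [g, hx, sq]
  have h_int : ∫ x, g x ^ 2 ∂μ = 0 := by
    refine le_antisymm ?_ (integral_nonneg fun x => sq_nonneg _)
    simpa [h_prod, h_weight] using hC g hg
  have hg0 : (fun x => g x ^ 2) =ᵐ[μ] 0 :=
    (integral_eq_zero_iff_of_nonneg (fun x => sq_nonneg _) hg.integrable_sq).1 h_int
  filter_upwards [hg0] with x hx hθx
  simpa [g, show x ∈ S from hθx] using hx

theorem IntegralMulLeWeightedNorm.lintegral_le (hθ : ∀ x, 0 ≤ θ x) {u : W → ℝ}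
    (hf : MemLp f 2 μ) (hfu : f =ᵐ[μ] fun x => θ x * u x)
    (hC : IntegralMulLeWeightedNorm μ f θ C) {E : Set W} (hE : MeasurableSet E)
    (hu : MemLp (E.indicator u) 2 μ) :
    ∫⁻ x in E, ENNReal.ofReal (θ x * u x ^ 2) ∂μ ≤ ENNReal.ofReal (C ^ 2) := by
  set g : W → ℝ := E.indicator u
  have h_prod : (fun x => f x * g x) =ᵐ[μ] fun x => θ x * g x ^ 2 := by
    filter_upwards [hfu] with x hx
    by_cases hxE : x ∈ E <;> simp [g, hx, hxE, sq, mul_assoc]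
  have h_int : Integrable (fun x => θ x * g x ^ 2) μ := (hf.integrable_mul hu).congr h_prod
  have h_nonneg : ∀ x, 0 ≤ θ x * g x ^ 2 := fun x => mul_nonneg (hθ x) (sq_nonneg _)
  -- `I ≤ C √I` for `I = ∫ θ g² ≥ 0`
  have h_le : ∫ x, θ x * g x ^ 2 ∂μ ≤ C ^ 2 := by
    have hI := hC g hu
    rw [integral_congr_ae h_prod] at hI
    have hI0 : 0 ≤ ∫ x, θ x * g x ^ 2 ∂μ := integral_nonneg h_nonneg
    nlinarith [Real.sq_sqrt hI0, Real.sqrt_nonneg (∫ x, θ x * g x ^ 2 ∂μ)]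
  calc ∫⁻ x in E, ENNReal.ofReal (θ x * u x ^ 2) ∂μ
      = ∫⁻ x, ENNReal.ofReal (θ x * g x ^ 2) ∂μ := by
        rw [← lintegral_indicator hE]
        congr 1 with x
        by_cases hx : x ∈ E <;> simp [g, hx]
    _ = ENNReal.ofReal (∫ x, θ x * g x ^ 2 ∂μ) :=
        (ofReal_integral_eq_lintegral_ofReal h_int (ae_of_all _ h_nonneg)).symm
    _ ≤ ENNReal.ofReal (C ^ 2) := ENNReal.ofReal_le_ofReal h_le

theorem memLp_indicator_setOf_le_of_ae_eq_mul (hf : MemLp f 2 μ) {u : W → ℝ}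
    (hum : Measurable u) (hfu : f =ᵐ[μ] fun x => θ x * u x) (hθm : Measurable θ)
    {ε : ℝ} (hε : 0 < ε) :
    MemLp ({x | ε ≤ θ x}.indicator u) 2 μ := by
  refine MemLp.of_le_mul (c := ε⁻¹) hf
    (hum.indicator (hθm measurableSet_Ici)).aestronglyMeasurable ?_
  filter_upwards [hfu] with x hx
  by_cases hxE : ε ≤ θ x
  · rw [indicator_of_mem (show x ∈ {x | ε ≤ θ x} from hxE), le_inv_mul_iff₀ hε, hx, norm_mul,
      Real.norm_of_nonneg (hε.le.trans hxE)]
    gcongr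
  · simp [hxE]
    positivity

theorem IntegralMulLeWeightedNorm.exists_eq_mul (hθm : Measurable θ)
    (hθ : ∀ x, 0 ≤ θ x) (hf : MemLp f 2 μ) (hC : IntegralMulLeWeightedNorm μ f θ C) :
    ∃ u : W → ℝ, Measurable u ∧ (f =ᵐ[μ] fun x => θ x * u x) ∧
      ∫⁻ x, ENNReal.ofReal (θ x * u x ^ 2) ∂μ ≤ ENNReal.ofReal (C ^ 2) := by
  obtain ⟨u, hum, hfu⟩ :=
    exists_measurable_ae_eq_mul hf.aemeasurable hθm (hC.ae_eq_zero_of_eq_zero hθm hf)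
  refine ⟨u, hum, hfu, ?_⟩
  set E : ℕ → Set W := fun n => {x | 1 / ((n : ℝ) + 1) ≤ θ x}
  have h_support : (fun x => ENNReal.ofReal (θ x * u x ^ 2)).support ⊆ ⋃ n, E n := by
    intro x hx
    have hθx : 0 < θ x := (hθ x).lt_of_ne fun h => hx (by simp [← h])
    obtain ⟨n, hn⟩ := exists_nat_one_div_lt hθx
    exact mem_iUnion.2 ⟨n, hn.le⟩
  have h_mono : Monotone E := fun m n hmn x (hx : _ ≤ θ x) =>
    (Nat.one_div_le_one_div hmn).trans hx
  rw [← setLIntegral_eq_of_support_subset h_support,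
    setLIntegral_iUnion_of_directed _ h_mono.directed_le]
  exact iSup_le fun n => hC.lintegral_le hθ hf hfu (hθm measurableSet_Ici)
    (memLp_indicator_setOf_le_of_ae_eq_mul hf hum hfu hθm Nat.one_div_pos_of_nat)

end

theorem stmt_5_general {W : Type*} [MeasurableSpace W] (μ : Measure W)
    (C₁ : ℝ) (hC₁ : 0 ≤ C₁)
    (v : ℕ → W → ℝ) (χ : ℕ → W → ℝ) (θ : W → ℝ) (vlim : W → ℝ)
    (hv : ∀ k, MemLp (v k) 2 μ)
    (hvb : ∀ k, eLpNorm (v k) 2 μ ≤ ENNReal.ofReal C₁)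
    (hχm : ∀ k, Measurable (χ k)) (hχ01 : ∀ k x, χ k x ∈ Set.Icc (0 : ℝ) 1)
    (hχv : ∀ k, (fun x => χ k x * v k x) =ᵐ[μ] v k)
    (hθm : Measurable θ) (hθ01 : ∀ x, θ x ∈ Set.Icc (0 : ℝ) 1)
    (hvlim : MemLp vlim 2 μ)
    (hweak : ∀ w : W → ℝ, MemLp w 2 μ →
      Tendsto (fun k => ∫ x, v k x * w x ∂μ) atTop (nhds (∫ x, vlim x * w x ∂μ)))
    (hχlim : ∀ g : W → ℝ, Integrable g μ →
      Tendsto (fun k => ∫ x, χ k x * g x ∂μ) atTop (nhds (∫ x, θ x * g x ∂μ))) :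
    ∃ u : W → ℝ, Measurable u ∧ (vlim =ᵐ[μ] fun x => θ x * u x) ∧
      ∫⁻ x, ENNReal.ofReal (θ x * u x ^ 2) ∂μ ≤ ENNReal.ofReal (C₁ ^ 2) := by
  have hC : IntegralMulLeWeightedNorm μ vlim θ C₁ := fun w hw => by
    refine le_of_tendsto_of_tendsto' (hweak w hw)
      (((hχlim _ hw.integrable_sq).sqrt).const_mul C₁) fun k => ?_
    calc ∫ x, v k x * w x ∂μ ≤ (eLpNorm (v k) 2 μ).toReal * √(∫ x, χ k x * w x ^ 2 ∂μ) :=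
          integral_mul_le_eLpNorm_mul_sqrt_integral_cutoff (hv k) hw (hχm k) (hχ01 k) (hχv k)
      _ ≤ C₁ * √(∫ x, χ k x * w x ^ 2 ∂μ) := by
          gcongr; exact ENNReal.toReal_le_of_le_ofReal hC₁ (hvb k)
  exact hC.exists_eq_mul hθm (fun x => (hθ01 x).1) hvlim

/-- If `v_k ⇀ ṽ` weakly in `L²(μ)`, `‖v_k‖ ≤ C₁`, `0 ≤ χ_k ≤ 1`,
`χ_k v_k = v_k` a.e., and `∫ χ_k g → ∫ θ g` for every `g ∈ L¹(μ)`, then `ṽ = θ·u`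
for some measurable `u` with `∫ θ u² ≤ C₁²`. -/
theorem stmt_5 {W : Type*} [MeasurableSpace W] (μ : Measure W) [SigmaFinite μ]
    (C₁ : ℝ) (hC₁ : 0 ≤ C₁)
    (v : ℕ → W → ℝ) (χ : ℕ → W → ℝ) (θ : W → ℝ) (vlim : W → ℝ)
    (hv : ∀ k, MemLp (v k) 2 μ)
    (hvb : ∀ k, eLpNorm (v k) 2 μ ≤ ENNReal.ofReal C₁)
    (hχm : ∀ k, Measurable (χ k)) (hχ01 : ∀ k x, χ k x ∈ Set.Icc (0 : ℝ) 1)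
    (hχv : ∀ k, (fun x => χ k x * v k x) =ᵐ[μ] v k)
    (hθm : Measurable θ) (hθ01 : ∀ x, θ x ∈ Set.Icc (0 : ℝ) 1)
    (hvlim : MemLp vlim 2 μ)
    (hweak : ∀ w : W → ℝ, MemLp w 2 μ →
      Tendsto (fun k => ∫ x, v k x * w x ∂μ) atTop (nhds (∫ x, vlim x * w x ∂μ)))
    (hχlim : ∀ g : W → ℝ, Integrable g μ →
      Tendsto (fun k => ∫ x, χ k x * g x ∂μ) atTop (nhds (∫ x, θ x * g x ∂μ))) :
    ∃ u : W → ℝ, Measurable u ∧ (vlim =ᵐ[μ] fun x => θ x * u x) ∧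
      ∫⁻ x, ENNReal.ofReal (θ x * u x ^ 2) ∂μ ≤ ENNReal.ofReal (C₁ ^ 2) :=
  stmt_5_general μ C₁ hC₁ v χ θ vlim hv hvb hχm hχ01 hχv hθm hθ01 hvlim hweak hχlim
end

section
/- Let Y ⊆ ℝ^N × ℝ be open and let a_{i−1} < a_i < a_{i+1} be real numbers. Let C be a connected component of the lower slab Y ∩ (ℝ^N × (a_{i−1}, a_i)) and C' a connected component of the upper slab Y ∩ (ℝ^N × (a_i, a_{i+1})), and suppose there exists an open ball B̃ ⊆ Y with B̃ ∩ C ≠ ∅ and B̃ ∩ C' ≠ ∅. Then there exist ξ₀ ∈ ℝ^N and r > 0 such that the ball B = B((ξ₀, a_i), r) satisfies B ⊆ Y ∩ (ℝ^N × (a_{i−1}, a_{i+1})), {(ξ,y) ∈ B : y < a_i} ⊆ C, and {(ξ,y) ∈ B : y > a_i} ⊆ C' (in particular B meets both C and C'). -/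
open Set

private lemma coord_dist_le {n : ℕ} (z p : EuclideanSpace ℝ (Fin n)) (i : Fin n) :
    dist (z i) (p i) ≤ dist z p := by
  rw [EuclideanSpace.dist_eq]
  have h : dist (z i) (p i) ^ 2 ≤ ∑ j, dist (z j) (p j) ^ 2 :=
    Finset.single_le_sum (f := fun j => dist (z j) (p j) ^ 2) (fun j _ => sq_nonneg _) (Finset.mem_univ i)
  calc dist (z i) (p i) = Real.sqrt (dist (z i) (p i) ^ 2) := by
        rw [Real.sqrt_sq dist_nonneg]
    _ ≤ _ := Real.sqrt_le_sqrt h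

private lemma slab_convex {n : ℕ} (i : Fin n) (b c : ℝ) :
    Convex ℝ {z : EuclideanSpace ℝ (Fin n) | z i ∈ Set.Ioo b c} := by
  intro u hu v hv s t hs ht hst
  have : (s • u + t • v) i = s * u i + t * v i := rfl
  simp only [Set.mem_setOf_eq, this]
  exact (convex_Ioo b c) hu hv hs ht hst

/-- If a connected component `C` of the lower slab and a connected
component `C'` of the upper slab are joined by a ball contained in `Y`, then there is a
ball centred at height `a₁`, contained in the double slab, whose lower half lies in `C`
and whose upper half lies in `C'` (in particular it meets both). -/
theorem stmt_13 {N : ℕ} (Y : Set (EuclideanSpace ℝ (Fin (N + 1)))) (hY : IsOpen Y)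
    (a₀ a₁ a₂ : ℝ) (h01 : a₀ < a₁) (h12 : a₁ < a₂)
    (C C' : Set (EuclideanSpace ℝ (Fin (N + 1))))
    (hC : ∃ z ∈ Y ∩ {z | z (Fin.last N) ∈ Set.Ioo a₀ a₁},
      C = connectedComponentIn (Y ∩ {z | z (Fin.last N) ∈ Set.Ioo a₀ a₁}) z)
    (hC' : ∃ z ∈ Y ∩ {z | z (Fin.last N) ∈ Set.Ioo a₁ a₂},
      C' = connectedComponentIn (Y ∩ {z | z (Fin.last N) ∈ Set.Ioo a₁ a₂}) z)
    (hjoin : ∃ (ct : EuclideanSpace ℝ (Fin (N + 1))) (rt : ℝ),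
      Metric.ball ct rt ⊆ Y ∧ (Metric.ball ct rt ∩ C).Nonempty ∧
        (Metric.ball ct rt ∩ C').Nonempty) :
    ∃ (c : EuclideanSpace ℝ (Fin (N + 1))) (r : ℝ), 0 < r ∧ c (Fin.last N) = a₁ ∧
      Metric.ball c r ⊆ Y ∩ {z | z (Fin.last N) ∈ Set.Ioo a₀ a₂} ∧
      {z ∈ Metric.ball c r | z (Fin.last N) < a₁} ⊆ C ∧
      {z ∈ Metric.ball c r | a₁ < z (Fin.last N)} ⊆ C' ∧
      (Metric.ball c r ∩ C).Nonempty ∧ (Metric.ball c r ∩ C').Nonempty := by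
  classical
  obtain ⟨zl, hzl, hCdef⟩ := hC
  obtain ⟨zu, hzu, hC'def⟩ := hC'
  obtain ⟨ct, rt, hBY, ⟨x, hxB, hxC⟩, ⟨x', hx'B, hx'C⟩⟩ := hjoin
  set i := Fin.last N with hi
  set L : Set (EuclideanSpace ℝ (Fin (N + 1))) :=
    Y ∩ {z | z i ∈ Set.Ioo a₀ a₁} with hLdef
  set U : Set (EuclideanSpace ℝ (Fin (N + 1))) :=
    Y ∩ {z | z i ∈ Set.Ioo a₁ a₂} with hUdef
  have hCL : C ⊆ L := hCdef ▸ connectedComponentIn_subset _ _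
  have hC'U : C' ⊆ U := hC'def ▸ connectedComponentIn_subset _ _
  have hxL : x ∈ L := hCL hxC
  have hx'U : x' ∈ U := hC'U hx'C
  have hxlt : x i < a₁ := hxL.2.2
  have hx'gt : a₁ < x' i := hx'U.2.1
  have hdpos : (0:ℝ) < x' i - x i := by linarith
  set s : ℝ := (a₁ - x i) / (x' i - x i) with hs
  have hs0 : 0 < s := div_pos (by linarith) hdpos
  have hs1 : s < 1 := by
    rw [div_lt_one hdpos]; linarith
  set p : EuclideanSpace ℝ (Fin (N + 1)) := (1 - s) • x + s • x' with hp
  have hp_last : p i = a₁ := by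
    have hpi : p i = (1 - s) * x i + s * x' i := rfl
    rw [hpi, hs]
    field_simp
    ring
  have hpB : p ∈ Metric.ball ct rt :=
    (convex_ball ct rt) hxB hx'B (by linarith) (le_of_lt hs0) (by ring)
  set r : ℝ := min (rt - dist p ct) (min (a₁ - a₀) (a₂ - a₁)) with hr
  have hr0 : 0 < r := by
    rw [hr]
    refine lt_min (by simpa using (Metric.mem_ball.mp hpB)) (lt_min (by linarith) (by linarith))
  have hr1 : r ≤ rt - dist p ct := min_le_left _ _
  have hr2 : r ≤ a₁ - a₀ := le_trans (min_le_right _ _) (min_le_left _ _)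
  have hr3 : r ≤ a₂ - a₁ := le_trans (min_le_right _ _) (min_le_right _ _)
  -- the ball is inside the big ball
  have hball_sub : Metric.ball p r ⊆ Metric.ball ct rt := by
    intro z hz
    have := Metric.mem_ball.mp hz
    have : dist z ct ≤ dist z p + dist p ct := dist_triangle _ _ _
    have := Metric.mem_ball.mp hz
    rw [Metric.mem_ball]
    calc dist z ct ≤ dist z p + dist p ct := dist_triangle _ _ _
      _ < r + dist p ct := by linarith [Metric.mem_ball.mp hz]
      _ ≤ rt := by linarith
  have hcoord : ∀ z ∈ Metric.ball p r, |z i - a₁| < r := by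
    intro z hz
    have h1 : dist (z i) (p i) ≤ dist z p := coord_dist_le z p i
    have h2 : dist z p < r := Metric.mem_ball.mp hz
    rw [hp_last] at h1
    calc |z i - a₁| = dist (z i) a₁ := by rw [Real.dist_eq]
      _ ≤ dist z p := by rw [← hp_last]; exact coord_dist_le z p i
      _ < r := h2
  -- lower convex connected set S
  set S : Set (EuclideanSpace ℝ (Fin (N + 1))) :=
    Metric.ball ct rt ∩ {z | z i ∈ Set.Ioo a₀ a₁} with hSdef
  have hSconv : Convex ℝ S := (convex_ball ct rt).inter (slab_convex i a₀ a₁)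
  have hSL : S ⊆ L := fun z hz => ⟨hBY hz.1, hz.2⟩
  have hxS : x ∈ S := ⟨hxB, hxL.2⟩
  have hCx : C = connectedComponentIn L x := by
    rw [hCdef]
    exact connectedComponentIn_eq (hCdef ▸ hxC)
  have hSC : S ⊆ C := by
    rw [hCx]
    exact hSconv.isPreconnected.subset_connectedComponentIn hxS hSL
  -- upper convex connected set S'
  set S' : Set (EuclideanSpace ℝ (Fin (N + 1))) :=
    Metric.ball ct rt ∩ {z | z i ∈ Set.Ioo a₁ a₂} with hS'def
  have hS'conv : Convex ℝ S' := (convex_ball ct rt).inter (slab_convex i a₁ a₂)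
  have hS'U : S' ⊆ U := fun z hz => ⟨hBY hz.1, hz.2⟩
  have hx'S' : x' ∈ S' := ⟨hx'B, hx'U.2⟩
  have hC'x : C' = connectedComponentIn U x' := by
    rw [hC'def]
    exact connectedComponentIn_eq (hC'def ▸ hx'C)
  have hS'C' : S' ⊆ C' := by
    rw [hC'x]
    exact hS'conv.isPreconnected.subset_connectedComponentIn hx'S' hS'U
  -- halves of the small ball
  have hlower : {z ∈ Metric.ball p r | z i < a₁} ⊆ C := by
    intro z ⟨hzB, hzlt⟩
    apply hSC
    refine ⟨hball_sub hzB, ?_, hzlt⟩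
    have := hcoord z hzB
    have := abs_lt.mp this
    linarith
  have hupper : {z ∈ Metric.ball p r | a₁ < z i} ⊆ C' := by
    intro z ⟨hzB, hzgt⟩
    apply hS'C'
    refine ⟨hball_sub hzB, hzgt, ?_⟩
    have := abs_lt.mp (hcoord z hzB)
    linarith
  -- witness points in the halves
  set e : EuclideanSpace ℝ (Fin (N + 1)) := EuclideanSpace.single i (1:ℝ) with he
  have hnorm_e : ‖e‖ = 1 := by simp [he, EuclideanSpace.norm_single]
  have hpt : ∀ c : ℝ, dist (p + c • e) p = |c| := by
    intro c
    rw [dist_eq_norm]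
    simp [norm_smul, hnorm_e]
  have hpte : ∀ c : ℝ, (p + c • e) i = a₁ + c := by
    intro c
    have : (p + c • e) i = p i + c * e i := rfl
    rw [this, hp_last]
    have : e i = 1 := by simp [he, EuclideanSpace.single_apply]
    rw [this]; ring
  have hqlow_mem : (p + (-(r/2)) • e) ∈ Metric.ball p r := by
    rw [Metric.mem_ball, hpt]
    rw [abs_neg, abs_of_pos (by linarith)]
    linarith
  have hqlowC : (p + (-(r/2)) • e) ∈ C := by
    apply hlower
    exact ⟨hqlow_mem, by rw [hpte]; linarith⟩
  have hqup_mem : (p + (r/2) • e) ∈ Metric.ball p r := by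
    rw [Metric.mem_ball, hpt, abs_of_pos (by linarith)]
    linarith
  have hqupC' : (p + (r/2) • e) ∈ C' := by
    apply hupper
    exact ⟨hqup_mem, by rw [hpte]; linarith⟩
  refine ⟨p, r, hr0, hp_last, ?_, hlower, hupper,
    ⟨_, hqlow_mem, hqlowC⟩, ⟨_, hqup_mem, hqupC'⟩⟩
  intro z hz
  have h1 := abs_lt.mp (hcoord z hz)
  exact ⟨hBY (hball_sub hz), by constructor <;> linarith [h1.1, h1.2]⟩
end

section
/- Let Y ⊆ ℝ^N × ℝ be open and let a_{i−1} < a_i < a_{i+1} be real numbers. Call a connected component L of the lower slab Y ∩ (ℝ^N × (a_{i−1}, a_i)) and a connected component U of the upper slab Y ∩ (ℝ^N × (a_i, a_{i+1})) joined, written L ∼ U, if there exists an open ball B ⊆ Y with B ∩ L ≠ ∅ and B ∩ U ≠ ∅. Let C be a connected component of the lower slab and C' a connected component of the upper slab. Then C and C' are contained in the same connected component of the double slab Y ∩ (ℝ^N × (a_{i−1}, a_{i+1})) if and only if there exist m ≥ 1, connected components C = L_1, L_2, …, L_m of the lower slab and connected components U_1, …, U_m = C' of the upper slab such that L_t ∼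 U_t for every t = 1,…,m and L_{t+1} ∼ U_t for every t = 1,…,m−1. -/
open Set

/-- `C` is a connected component of the set `A`. -/
def IsCompOf {X : Type*} [TopologicalSpace X] (A C : Set X) : Prop :=
  ∃ z ∈ A, C = connectedComponentIn A z

/-- A component `L` of the lower slab and a component `U` of the upper slab are *joined*
if some open ball contained in `Y` meets both. -/
def JoinedBy {N : ℕ} (Y L U : Set (EuclideanSpace ℝ (Fin (N + 1)))) : Prop :=
  ∃ (c : EuclideanSpace ℝ (Fin (N + 1))) (r : ℝ),
    Metric.ball c r ⊆ Y ∧ (Metric.ball c r ∩ L).Nonempty ∧ (Metric.ball c r ∩ U).Nonempty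

namespace Stmt14

variable {N : ℕ}

/-- The open slab between heights `a` and `b`. -/
def Slab (N : ℕ) (a b : ℝ) : Set (EuclideanSpace ℝ (Fin (N + 1))) :=
  {z | z (Fin.last N) ∈ Set.Ioo a b}

lemma convex_slab (a b : ℝ) : Convex ℝ (Slab N a b) := by
  intro x hx y hy s t hs ht hst
  have h : (s • x + t • y) (Fin.last N) = s * x (Fin.last N) + t * y (Fin.last N) := rfl
  show (s • x + t • y) (Fin.last N) ∈ Set.Ioo a b
  rw [h]
  exact convex_Ioo a b hx hy hs ht hst

lemma isOpen_slab (a b : ℝ) : IsOpen (Slab N a b) :=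
  isOpen_Ioo.preimage (EuclideanSpace.proj (𝕜 := ℝ) (Fin.last N)).continuous

lemma slab_mono {a b a' b' : ℝ} (ha : a' ≤ a) (hb : b ≤ b') : Slab N a b ⊆ Slab N a' b' :=
  fun _ hz => ⟨lt_of_le_of_lt ha hz.1, lt_of_lt_of_le hz.2 hb⟩

lemma coord_dist_le (p q : EuclideanSpace ℝ (Fin (N + 1))) (i : Fin (N + 1)) :
    |p i - q i| ≤ dist p q := by
  rw [EuclideanSpace.dist_eq]
  rw [show |p i - q i| = Real.sqrt (|p i - q i| ^ 2) by rw [Real.sqrt_sq_eq_abs, abs_abs]]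
  apply Real.sqrt_le_sqrt
  rw [sq_abs]
  have h : (p i - q i) ^ 2 = dist (p i) (q i) ^ 2 := by rw [Real.dist_eq, sq_abs]
  rw [h]
  exact Finset.single_le_sum (f := fun j => dist (p j) (q j) ^ 2)
    (fun j _ => sq_nonneg _) (Finset.mem_univ i)

lemma below_apply (p : EuclideanSpace ℝ (Fin (N + 1))) (ε : ℝ) :
    (p - EuclideanSpace.single (Fin.last N) ε) (Fin.last N) = p (Fin.last N) - ε := by
  simp [EuclideanSpace.single_apply]

lemma below_dist (p : EuclideanSpace ℝ (Fin (N + 1))) (ε : ℝ) :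
    dist (p - EuclideanSpace.single (Fin.last N) ε) p = |ε| := by
  rw [dist_eq_norm]
  simp [EuclideanSpace.norm_single]

section comp

variable {X : Type*} [TopologicalSpace X] {A B C D : Set X}

lemma _root_.IsCompOf.subset (h : IsCompOf A C) : C ⊆ A := by
  obtain ⟨z, _, rfl⟩ := h; exact connectedComponentIn_subset A z

lemma _root_.IsCompOf.nonempty (h : IsCompOf A C) : C.Nonempty := by
  obtain ⟨z, hz, rfl⟩ := h; exact ⟨z, mem_connectedComponentIn hz⟩

lemma _root_.IsCompOf.preconnected (h : IsCompOf A C) : IsPreconnected C := by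
  obtain ⟨z, _, rfl⟩ := h; exact isPreconnected_connectedComponentIn

lemma _root_.IsCompOf.eq_compIn (h : IsCompOf A C) {z : X} (hz : z ∈ C) :
    C = connectedComponentIn A z := by
  obtain ⟨w, hw, rfl⟩ := h; exact connectedComponentIn_eq hz

lemma _root_.IsCompOf.eq_of_mem (h : IsCompOf A C) (h' : IsCompOf A D) {z : X}
    (hz : z ∈ C) (hz' : z ∈ D) : C = D := by
  rw [h.eq_compIn hz, h'.eq_compIn hz']

end comp

variable (Y : Set (EuclideanSpace ℝ (Fin (N + 1)))) (a₀ a₁ a₂ : ℝ)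

/-- One step of the join relation. -/
def Rel (A B : Set (EuclideanSpace ℝ (Fin (N + 1)))) : Prop :=
  (IsCompOf (Y ∩ Slab N a₀ a₁) A ∧ IsCompOf (Y ∩ Slab N a₁ a₂) B ∧ JoinedBy Y A B) ∨
  (IsCompOf (Y ∩ Slab N a₁ a₂) A ∧ IsCompOf (Y ∩ Slab N a₀ a₁) B ∧ JoinedBy Y B A)

variable {Y a₀ a₁ a₂}

lemma not_both (h01 : a₀ < a₁) {X : Set (EuclideanSpace ℝ (Fin (N + 1)))}
    (hL : IsCompOf (Y ∩ Slab N a₀ a₁) X) (hU : IsCompOf (Y ∩ Slab N a₁ a₂) X) : False := by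
  obtain ⟨z, hz⟩ := hL.nonempty
  have h1 : z (Fin.last N) < a₁ := (hL.subset hz).2.2
  have h2 : a₁ < z (Fin.last N) := (hU.subset hz).2.1
  exact absurd (h1.trans h2) (lt_irrefl _)

lemma ball_inter_eq {c : EuclideanSpace ℝ (Fin (N + 1))} {r : ℝ}
    (hball : Metric.ball c r ⊆ Y) (a b : ℝ) :
    Metric.ball c r ∩ (Y ∩ Slab N a b) = Metric.ball c r ∩ Slab N a b := by
  ext x; exact ⟨fun h => ⟨h.1, h.2.2⟩, fun h => ⟨h.1, hball h.1, h.2⟩⟩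

lemma ball_inter_preconn {c : EuclideanSpace ℝ (Fin (N + 1))} {r : ℝ}
    (hball : Metric.ball c r ⊆ Y) (a b : ℝ) :
    IsPreconnected (Metric.ball c r ∩ (Y ∩ Slab N a b)) := by
  rw [ball_inter_eq hball a b]
  exact ((convex_ball c r).inter (convex_slab a b)).isPreconnected

/-- A ball inside `Y` meets the slab component `L` in such a way that the whole
ball-slab intersection is inside `L`. -/
lemma ball_inter_subset_comp {c : EuclideanSpace ℝ (Fin (N + 1))} {r : ℝ} {a b : ℝ}
    {L : Set (EuclideanSpace ℝ (Fin (N + 1)))}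
    (hball : Metric.ball c r ⊆ Y) (hL : IsCompOf (Y ∩ Slab N a b) L)
    (hmeet : (Metric.ball c r ∩ L).Nonempty) :
    Metric.ball c r ∩ (Y ∩ Slab N a b) ⊆ L := by
  obtain ⟨x, hxb, hxL⟩ := hmeet
  rw [hL.eq_compIn hxL]
  exact (ball_inter_preconn hball a b).subset_connectedComponentIn
    ⟨hxb, hL.subset hxL⟩ inter_subset_right

/-- Point slightly below a center at height `a₁` witnesses nonemptiness of the
lower part of the ball. -/
lemma ball_lower_nonempty {p : EuclideanSpace ℝ (Fin (N + 1))} {r : ℝ}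
    (h01 : a₀ < a₁) (hp : p (Fin.last N) = a₁) (hr : 0 < r)
    (hball : Metric.ball p r ⊆ Y) :
    (Metric.ball p r ∩ (Y ∩ Slab N a₀ a₁)).Nonempty := by
  have hmin : 0 < min r (a₁ - a₀) := lt_min hr (by linarith)
  set ε := min r (a₁ - a₀) / 2 with hε
  have hε0 : 0 < ε := by positivity
  have hεr : ε < r := by
    have := min_le_left r (a₁ - a₀); rw [hε]; linarith
  have hεa : ε < a₁ - a₀ := by
    have := min_le_right r (a₁ - a₀); rw [hε]; linarith
  refine ⟨p - EuclideanSpace.single (Fin.last N) ε, ?_, ?_, ?_⟩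
  · show _ ∈ Metric.ball p r
    rw [Metric.mem_ball, below_dist, abs_of_pos hε0]
    exact hεr
  · apply hball
    rw [Metric.mem_ball, below_dist, abs_of_pos hε0]
    exact hεr
  · show _ ∈ Slab N a₀ a₁
    have := below_apply p ε
    constructor
    · rw [this, hp]; linarith
    · rw [this, hp]; linarith


/-- Two joined components lie in a common preconnected subset of the double slab. -/
lemma joined_subset (h01 : a₀ < a₁) (h12 : a₁ < a₂)
    {A B : Set (EuclideanSpace ℝ (Fin (N + 1)))}
    (hA : IsCompOf (Y ∩ Slab N a₀ a₁) A) (hB : IsCompOf (Y ∩ Slab N a₁ a₂) B)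
    (hJ : JoinedBy Y A B) :
    ∃ T, IsPreconnected T ∧ T ⊆ Y ∩ Slab N a₀ a₂ ∧ A ⊆ T ∧ B ⊆ T := by
  obtain ⟨c, r, hball, ⟨x, hxb, hxA⟩, ⟨y, hyb, hyB⟩⟩ := hJ
  set M := Metric.ball c r ∩ Slab N a₀ a₂ with hM
  have hMpre : IsPreconnected M := ((convex_ball c r).inter (convex_slab a₀ a₂)).isPreconnected
  have hAS : A ⊆ Y ∩ Slab N a₀ a₂ :=
    hA.subset.trans (inter_subset_inter_right Y (slab_mono le_rfl h12.le))
  have hBS : B ⊆ Y ∩ Slab N a₀ a₂ :=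
    hB.subset.trans (inter_subset_inter_right Y (slab_mono h01.le le_rfl))
  have hMS : M ⊆ Y ∩ Slab N a₀ a₂ := fun z hz => ⟨hball hz.1, hz.2⟩
  have hxM : x ∈ M := ⟨hxb, (hAS hxA).2⟩
  have hyM : y ∈ M := ⟨hyb, (hBS hyB).2⟩
  have hAM : IsPreconnected (A ∪ M) :=
    IsPreconnected.union x hxA hxM hA.preconnected hMpre
  have hT : IsPreconnected ((A ∪ M) ∪ B) :=
    IsPreconnected.union y (Or.inr hyM) hyB hAM hB.preconnected
  exact ⟨(A ∪ M) ∪ B, hT, union_subset (union_subset hAS hMS) hBS,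
    fun z hz => Or.inl (Or.inl hz), fun z hz => Or.inr hz⟩

section chains

/-- `U` is reachable from `C` by a chain. -/
def Reach (Y : Set (EuclideanSpace ℝ (Fin (N + 1)))) (a₀ a₁ a₂ : ℝ)
    (C X : Set (EuclideanSpace ℝ (Fin (N + 1)))) : Prop :=
  Relation.ReflTransGen (Rel Y a₀ a₁ a₂) C X

variable {C : Set (EuclideanSpace ℝ (Fin (N + 1)))}

lemma reach_comp (hC : IsCompOf (Y ∩ Slab N a₀ a₁) C)
    {X : Set (EuclideanSpace ℝ (Fin (N + 1)))} (h : Reach Y a₀ a₁ a₂ C X) :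
    IsCompOf (Y ∩ Slab N a₀ a₁) X ∨ IsCompOf (Y ∩ Slab N a₁ a₂) X := by
  rcases Relation.ReflTransGen.cases_tail h with h1 | ⟨c, _, hc⟩
  · rw [h1]; exact Or.inl hC
  · rcases hc with ⟨_, h2, _⟩ | ⟨_, h2, _⟩
    · exact Or.inr h2
    · exact Or.inl h2

/-- Chains in the required form, ending at an upper component `U`. -/
def ChainU (Y : Set (EuclideanSpace ℝ (Fin (N + 1)))) (a₀ a₁ a₂ : ℝ)
    (C U : Set (EuclideanSpace ℝ (Fin (N + 1)))) : Prop :=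
  ∃ m : ℕ, 1 ≤ m ∧ ∃ Ls Us : ℕ → Set (EuclideanSpace ℝ (Fin (N + 1))),
    Ls 0 = C ∧ Us (m - 1) = U ∧
    (∀ t < m, IsCompOf (Y ∩ Slab N a₀ a₁) (Ls t) ∧
      IsCompOf (Y ∩ Slab N a₁ a₂) (Us t) ∧ JoinedBy Y (Ls t) (Us t)) ∧
    (∀ t, t + 1 < m → JoinedBy Y (Ls (t + 1)) (Us t))

/-- Chains ending at a lower component `L`. -/
def ChainL (Y : Set (EuclideanSpace ℝ (Fin (N + 1)))) (a₀ a₁ a₂ : ℝ)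
    (C L : Set (EuclideanSpace ℝ (Fin (N + 1)))) : Prop :=
  L = C ∨ ∃ U, ChainU Y a₀ a₁ a₂ C U ∧ JoinedBy Y L U

lemma chainL_extend (hC : IsCompOf (Y ∩ Slab N a₀ a₁) C)
    {L U : Set (EuclideanSpace ℝ (Fin (N + 1)))}
    (hLc : IsCompOf (Y ∩ Slab N a₀ a₁) L) (hUc : IsCompOf (Y ∩ Slab N a₁ a₂) U)
    (hchain : ChainL Y a₀ a₁ a₂ C L) (hJ : JoinedBy Y L U) :
    ChainU Y a₀ a₁ a₂ C U := by
  rcases hchain with rfl | ⟨U0, hU0, hJ0⟩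
  · exact ⟨1, le_refl 1, fun _ => L, fun _ => U, rfl, rfl,
      fun t ht => ⟨hLc, hUc, hJ⟩, fun t ht => absurd ht (by omega)⟩
  · obtain ⟨m, hm, Ls, Us, hL0, hUm, hall, hsucc⟩ := hU0
    refine ⟨m + 1, by omega, (fun t => if t < m then Ls t else L),
      (fun t => if t < m then Us t else U), ?_, ?_, ?_, ?_⟩
    · simp only [if_pos (by omega : 0 < m)]; exact hL0
    · simp only [Nat.add_sub_cancel, if_neg (lt_irrefl m)]
    · intro t ht
      by_cases h : t < m
      · simp only [if_pos h]; exact hall t h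
      · simp only [if_neg h]; exact ⟨hLc, hUc, hJ⟩
    · intro t ht
      by_cases h : t + 1 < m
      · have htm : t < m := by omega
        simp only [if_pos h, if_pos htm]
        exact hsucc t h
      · have h1 : t + 1 = m := by omega
        have htm : t < m := by omega
        have h2 : m - 1 = t := by omega
        simp only [if_neg h, if_pos htm]
        rw [← h2, hUm]
        exact hJ0

/-- A reachable upper component admits a chain in the required form. -/
lemma reach_to_chain (h01 : a₀ < a₁) (hC : IsCompOf (Y ∩ Slab N a₀ a₁) C)
    {X : Set (EuclideanSpace ℝ (Fin (N + 1)))} (h : Reach Y a₀ a₁ a₂ C X) :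
    (IsCompOf (Y ∩ Slab N a₀ a₁) X → ChainL Y a₀ a₁ a₂ C X) ∧
    (IsCompOf (Y ∩ Slab N a₁ a₂) X → ChainU Y a₀ a₁ a₂ C X) := by
  induction h with
  | refl =>
      exact ⟨fun _ => Or.inl rfl, fun hU => absurd (not_both h01 hC hU) (fun f => f)⟩
  | tail hab hbc ih =>
      rcases hbc with ⟨hL, hU, hJ⟩ | ⟨hU, hL, hJ⟩
      · exact ⟨fun hl => absurd (not_both h01 hl hU) (fun f => f),
          fun _ => chainL_extend hC hL hU (ih.1 hL) hJ⟩
      · exact ⟨fun _ => Or.inr ⟨_, ih.2 hU, hJ⟩,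
          fun hu => absurd (not_both h01 hL hu) (fun f => f)⟩

end chains


/-- The unique lower component determined by a ball centered at height `a₁`. -/
lemma central_comp (h01 : a₀ < a₁) {p : EuclideanSpace ℝ (Fin (N + 1))} {r : ℝ}
    (hp : p (Fin.last N) = a₁) (hr : 0 < r) (hball : Metric.ball p r ⊆ Y) :
    ∃ L, IsCompOf (Y ∩ Slab N a₀ a₁) L ∧
      Metric.ball p r ∩ (Y ∩ Slab N a₀ a₁) ⊆ L ∧ (Metric.ball p r ∩ L).Nonempty ∧
      ∀ L', IsCompOf (Y ∩ Slab N a₀ a₁) L' → (Metric.ball p r ∩ L').Nonempty → L' = L := by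
  obtain ⟨w, hwb, hwS⟩ := ball_lower_nonempty (Y := Y) h01 hp hr hball
  refine ⟨connectedComponentIn (Y ∩ Slab N a₀ a₁) w, ⟨w, hwS, rfl⟩, ?_, ?_, ?_⟩
  · exact (ball_inter_preconn hball a₀ a₁).subset_connectedComponentIn
      ⟨hwb, hwS⟩ inter_subset_right
  · exact ⟨w, hwb, mem_connectedComponentIn hwS⟩
  · intro L' hL' ⟨x, hxb, hxL'⟩
    have hxL : x ∈ connectedComponentIn (Y ∩ Slab N a₀ a₁) w :=
      (ball_inter_preconn hball a₀ a₁).subset_connectedComponentIn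
        ⟨hwb, hwS⟩ inter_subset_right ⟨hxb, hL'.subset hxL'⟩
    exact hL'.eq_of_mem ⟨w, hwS, rfl⟩ hxL' hxL

/-- Forward direction: same component of the double slab implies reachability. -/
lemma reach_of_sameComp (hY : IsOpen Y) (h01 : a₀ < a₁) (h12 : a₁ < a₂)
    {C C' : Set (EuclideanSpace ℝ (Fin (N + 1)))}
    (hC : IsCompOf (Y ∩ Slab N a₀ a₁) C) (hC' : IsCompOf (Y ∩ Slab N a₁ a₂) C')
    (hD : ∃ D, IsCompOf (Y ∩ Slab N a₀ a₂) D ∧ C ⊆ D ∧ C' ⊆ D) :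
    Reach Y a₀ a₁ a₂ C C' := by
  classical
  set Slo := Y ∩ Slab N a₀ a₁ with hSlo
  set Shi := Y ∩ Slab N a₁ a₂ with hShi
  set S := Y ∩ Slab N a₀ a₂ with hS
  set E : Set (EuclideanSpace ℝ (Fin (N + 1))) :=
    {p | (∃ X, Reach Y a₀ a₁ a₂ C X ∧ p ∈ X) ∨
      (p ∈ Y ∧ p (Fin.last N) = a₁ ∧ ∃ L r, 0 < r ∧ Metric.ball p r ⊆ Y ∧
        IsCompOf Slo L ∧ Reach Y a₀ a₁ a₂ C L ∧ (Metric.ball p r ∩ L).Nonempty)} with hE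
  have hSloo : IsOpen Slo := hY.inter (isOpen_slab a₀ a₁)
  have hShio : IsOpen Shi := hY.inter (isOpen_slab a₁ a₂)
  -- openness of E
  have hEopen : IsOpen E := by
    rw [Metric.isOpen_iff]
    rintro p (⟨X, hX, hpX⟩ | ⟨hpY, hpa, L, r, hr, hball, hLc, hLr, hmeet⟩)
    · have hXo : IsOpen X := by
        rcases reach_comp hC hX with hXc | hXc
        · obtain ⟨z, hz, rfl⟩ := hXc; exact hSloo.connectedComponentIn
        · obtain ⟨z, hz, rfl⟩ := hXc; exact hShio.connectedComponentIn
      obtain ⟨ε, hε, hsub⟩ := Metric.isOpen_iff.1 hXo p hpX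
      exact ⟨ε, hε, fun q hq => Or.inl ⟨X, hX, hsub hq⟩⟩
    · set r' := min r (min (a₁ - a₀) (a₂ - a₁)) with hr'def
      have hr' : 0 < r' := lt_min hr (lt_min (by linarith) (by linarith))
      have hr'r : r' ≤ r := min_le_left _ _
      have hr'1 : r' ≤ a₁ - a₀ := le_trans (min_le_right _ _) (min_le_left _ _)
      have hr'2 : r' ≤ a₂ - a₁ := le_trans (min_le_right _ _) (min_le_right _ _)
      have hball' : Metric.ball p r' ⊆ Y :=
        (Metric.ball_subset_ball hr'r).trans hball
      have hsubL : Metric.ball p r' ∩ Slo ⊆ L :=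
        ((inter_subset_inter_left Slo (Metric.ball_subset_ball hr'r)).trans
          (ball_inter_subset_comp hball hLc hmeet))
      obtain ⟨w, hwb, hwS⟩ := ball_lower_nonempty (Y := Y) h01 hpa hr' hball'
      have hmeet' : (Metric.ball p r' ∩ L).Nonempty := ⟨w, hwb, hsubL ⟨hwb, hwS⟩⟩
      refine ⟨r', hr', fun q hq => ?_⟩
      have hqY : q ∈ Y := hball' hq
      have hqd : dist q p < r' := Metric.mem_ball.1 hq
      have hcoord : |q (Fin.last N) - a₁| < r' := by
        have := coord_dist_le q p (Fin.last N)
        rw [hpa] at this; linarith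
      have habs1 : q (Fin.last N) - a₁ < r' := (abs_lt.1 hcoord).2
      have habs2 : -(r') < q (Fin.last N) - a₁ := (abs_lt.1 hcoord).1
      rcases lt_trichotomy (q (Fin.last N)) a₁ with h | h | h
      · exact Or.inl ⟨L, hLr, hsubL ⟨hq, hqY, by constructor <;> [linarith; exact h]⟩⟩
      · right
        refine ⟨hqY, h, L, r' - dist q p, by linarith, ?_, hLc, hLr, ?_⟩
        · exact (Metric.ball_subset_ball' (by rw [dist_comm]; linarith)).trans hball'
        · have hbq : Metric.ball q (r' - dist q p) ⊆ Metric.ball p r' :=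
            Metric.ball_subset_ball' (by rw [dist_comm]; linarith)
          obtain ⟨v, hvb, hvS⟩ := ball_lower_nonempty (Y := Y) h01 h
            (by linarith : (0:ℝ) < r' - dist q p) (hbq.trans hball')
          exact ⟨v, hvb, hsubL ⟨hbq hvb, hvS⟩⟩
      · left
        have hqShi : q ∈ Shi := ⟨hqY, h, by linarith⟩
        refine ⟨connectedComponentIn Shi q, ?_, mem_connectedComponentIn hqShi⟩
        exact hLr.tail (Or.inl ⟨hLc, ⟨q, hqShi, rfl⟩,
          ⟨p, r', hball', hmeet', ⟨q, hq, mem_connectedComponentIn hqShi⟩⟩⟩)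
  -- relative closedness of E
  have hEclosed : ∀ p ∈ S, p ∈ closure E → p ∈ E := by
    intro p hpS hpcl
    obtain ⟨hpY, hpa0, hpa2⟩ : p ∈ Y ∧ a₀ < p (Fin.last N) ∧ p (Fin.last N) < a₂ :=
      ⟨hpS.1, hpS.2.1, hpS.2.2⟩
    obtain ⟨r, hr, hball⟩ := Metric.isOpen_iff.1 hY p hpY
    rcases lt_trichotomy (p (Fin.last N)) a₁ with hp | hp | hp
    · -- p strictly below the middle height
      set r' := min r (min (p (Fin.last N) - a₀) (a₁ - p (Fin.last N))) with hr'def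
      have hr' : 0 < r' := lt_min hr (lt_min (by linarith) (by linarith))
      have hr'r : r' ≤ r := min_le_left _ _
      have hr'1 : r' ≤ p (Fin.last N) - a₀ := le_trans (min_le_right _ _) (min_le_left _ _)
      have hr'2 : r' ≤ a₁ - p (Fin.last N) := le_trans (min_le_right _ _) (min_le_right _ _)
      have hball' : Metric.ball p r' ⊆ Y := (Metric.ball_subset_ball hr'r).trans hball
      have hbS : Metric.ball p r' ⊆ Slo := by
        intro q hq
        have hcoord := coord_dist_le q p (Fin.last N)
        have hqd : dist q p < r' := Metric.mem_ball.1 hq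
        have h1 := (abs_lt.1 (lt_of_le_of_lt hcoord hqd)).1
        have h2 := (abs_lt.1 (lt_of_le_of_lt hcoord hqd)).2
        exact ⟨hball' hq, by linarith, by linarith⟩
      obtain ⟨q, hqE, hqd⟩ := Metric.mem_closure_iff.1 hpcl r' hr'
      have hqb : q ∈ Metric.ball p r' := Metric.mem_ball.2 (by rw [dist_comm]; exact hqd)
      have hqSlo : q ∈ Slo := hbS hqb
      rcases hqE with ⟨X, hX, hqX⟩ | ⟨_, hqa, _⟩
      · rcases reach_comp hC hX with hXc | hXc
        · left
          refine ⟨X, hX, ?_⟩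
          rw [hXc.eq_compIn hqX]
          exact ((convex_ball p r').isPreconnected).subset_connectedComponentIn
            hqb hbS (Metric.mem_ball_self hr')
        · exact absurd hqSlo.2.2 (not_lt.2 (le_of_lt (hXc.subset hqX).2.1))
      · exact absurd hqa (by have := hqSlo.2.2; intro hh; rw [hh] at this; exact lt_irrefl _ this)
    · -- p exactly at the middle height
      set r' := min r (min (a₁ - a₀) (a₂ - a₁)) with hr'def
      have hr' : 0 < r' := lt_min hr (lt_min (by linarith) (by linarith))
      have hr'r : r' ≤ r := min_le_left _ _
      have hball' : Metric.ball p r' ⊆ Y := (Metric.ball_subset_ball hr'r).trans hball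
      obtain ⟨L₀, hL₀c, hL₀sub, hL₀meet, hL₀uniq⟩ :=
        central_comp (Y := Y) h01 hp hr' hball'
      obtain ⟨q, hqE, hqd⟩ := Metric.mem_closure_iff.1 hpcl r' hr'
      have hqb : q ∈ Metric.ball p r' := Metric.mem_ball.2 (by rw [dist_comm]; exact hqd)
      have hReachL₀ : Reach Y a₀ a₁ a₂ C L₀ := by
        rcases hqE with ⟨X, hX, hqX⟩ | ⟨hqY, hqa, L₁, r₁, hr₁, hball₁, hL₁c, hL₁r, hmeet₁⟩
        · rcases reach_comp hC hX with hXc | hXc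
          · rwa [hL₀uniq X hXc ⟨q, hqb, hqX⟩] at hX
          · exact hX.tail (Or.inr ⟨hXc, hL₀c,
              ⟨p, r', hball', hL₀meet, ⟨q, hqb, hqX⟩⟩⟩)
        · -- q is itself a middle-height point of E
          set ρ := min r₁ (r' - dist q p) with hρdef
          have hρ : 0 < ρ := lt_min hr₁ (by rw [dist_comm] at hqd; linarith)
          have hbq1 : Metric.ball q ρ ⊆ Metric.ball q r₁ :=
            Metric.ball_subset_ball (min_le_left _ _)
          have hbq2 : Metric.ball q ρ ⊆ Metric.ball p r' :=
            (Metric.ball_subset_ball (min_le_right _ _)).trans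
              (Metric.ball_subset_ball' (by rw [dist_comm]; linarith))
          obtain ⟨w, hwb, hwS⟩ := ball_lower_nonempty (Y := Y) h01 hqa hρ
            (hbq1.trans hball₁)
          have hwL₁ : w ∈ L₁ :=
            ball_inter_subset_comp hball₁ hL₁c hmeet₁ ⟨hbq1 hwb, hwS⟩
          have hwL₀ : w ∈ L₀ := hL₀sub ⟨hbq2 hwb, hwS⟩
          have : L₁ = L₀ := hL₁c.eq_of_mem hL₀c hwL₁ hwL₀
          rwa [this] at hL₁r
      exact Or.inr ⟨hpY, hp, L₀, r', hr', hball', hL₀c, hReachL₀, hL₀meet⟩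
    · -- p strictly above the middle height
      set r' := min r (min (p (Fin.last N) - a₁) (a₂ - p (Fin.last N))) with hr'def
      have hr' : 0 < r' := lt_min hr (lt_min (by linarith) (by linarith))
      have hr'r : r' ≤ r := min_le_left _ _
      have hr'1 : r' ≤ p (Fin.last N) - a₁ := le_trans (min_le_right _ _) (min_le_left _ _)
      have hr'2 : r' ≤ a₂ - p (Fin.last N) := le_trans (min_le_right _ _) (min_le_right _ _)
      have hball' : Metric.ball p r' ⊆ Y := (Metric.ball_subset_ball hr'r).trans hball
      have hbS : Metric.ball p r' ⊆ Shi := by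
        intro q hq
        have hcoord := coord_dist_le q p (Fin.last N)
        have hqd : dist q p < r' := Metric.mem_ball.1 hq
        have h1 := (abs_lt.1 (lt_of_le_of_lt hcoord hqd)).1
        have h2 := (abs_lt.1 (lt_of_le_of_lt hcoord hqd)).2
        exact ⟨hball' hq, by linarith, by linarith⟩
      obtain ⟨q, hqE, hqd⟩ := Metric.mem_closure_iff.1 hpcl r' hr'
      have hqb : q ∈ Metric.ball p r' := Metric.mem_ball.2 (by rw [dist_comm]; exact hqd)
      have hqShi : q ∈ Shi := hbS hqb
      rcases hqE with ⟨X, hX, hqX⟩ | ⟨_, hqa, _⟩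
      · rcases reach_comp hC hX with hXc | hXc
        · exact absurd hqShi.2.1 (not_lt.2 (le_of_lt (hXc.subset hqX).2.2))
        · left
          refine ⟨X, hX, ?_⟩
          rw [hXc.eq_compIn hqX]
          exact ((convex_ball p r').isPreconnected).subset_connectedComponentIn
            hqb hbS (Metric.mem_ball_self hr')
      · exact absurd hqa (by have := hqShi.2.1; intro hh; rw [hh] at this; exact lt_irrefl _ this)
  -- conclude via connectedness of D
  obtain ⟨D, hDc, hCD, hC'D⟩ := hD
  obtain ⟨zD, hzD, rfl⟩ := hDc
  have hDpre : IsPreconnected (connectedComponentIn S zD) := isPreconnected_connectedComponentIn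
  have hDS : connectedComponentIn S zD ⊆ S := connectedComponentIn_subset S zD
  obtain ⟨z₀, hz₀C⟩ := hC.nonempty
  have hz₀E : z₀ ∈ E := Or.inl ⟨C, Relation.ReflTransGen.refl, hz₀C⟩
  have hsub : connectedComponentIn S zD ⊆ E ∪ (closure E)ᶜ := by
    intro x hx
    by_cases hxc : x ∈ closure E
    · exact Or.inl (hEclosed x (hDS hx) hxc)
    · exact Or.inr hxc
  have hDE : connectedComponentIn S zD ⊆ E := by
    by_cases hv : (connectedComponentIn S zD ∩ (closure E)ᶜ).Nonempty
    · obtain ⟨x, _, hx2, hx3⟩ := hDpre E (closure E)ᶜ hEopen isClosed_closure.isOpen_compl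
        hsub ⟨z₀, hCD hz₀C, hz₀E⟩ hv
      exact absurd (subset_closure hx2) hx3
    · exact fun x hx => (hsub hx).resolve_right (fun hxc => hv ⟨x, hx, hxc⟩)
  obtain ⟨z', hz'C'⟩ := hC'.nonempty
  have hz'Shi : z' ∈ Shi := hC'.subset hz'C'
  have hz'E : z' ∈ E := hDE (hC'D hz'C')
  rcases hz'E with ⟨X, hX, hz'X⟩ | ⟨_, hz'a, _⟩
  · rcases reach_comp hC hX with hXc | hXc
    · exact absurd hz'Shi.2.1 (not_lt.2 (le_of_lt (hXc.subset hz'X).2.2))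
    · rwa [hXc.eq_of_mem hC' hz'X hz'C']  at hX
  · exact absurd hz'a (by have := hz'Shi.2.1; intro hh; rw [hh] at this; exact lt_irrefl _ this)

end Stmt14

open Stmt14

/-- A component `C` of the lower slab and a component `C'` of the upper
slab lie in the same component of the double slab iff they are connected by a finite
alternating chain of joined components. -/
theorem stmt_14 {N : ℕ} (Y : Set (EuclideanSpace ℝ (Fin (N + 1)))) (hY : IsOpen Y)
    (a₀ a₁ a₂ : ℝ) (h01 : a₀ < a₁) (h12 : a₁ < a₂)
    (C C' : Set (EuclideanSpace ℝ (Fin (N + 1))))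
    (hC : IsCompOf (Y ∩ {z | z (Fin.last N) ∈ Set.Ioo a₀ a₁}) C)
    (hC' : IsCompOf (Y ∩ {z | z (Fin.last N) ∈ Set.Ioo a₁ a₂}) C') :
    (∃ D, IsCompOf (Y ∩ {z | z (Fin.last N) ∈ Set.Ioo a₀ a₂}) D ∧ C ⊆ D ∧ C' ⊆ D) ↔
    (∃ m : ℕ, 1 ≤ m ∧ ∃ Ls Us : ℕ → Set (EuclideanSpace ℝ (Fin (N + 1))),
      Ls 0 = C ∧ Us (m - 1) = C' ∧
      (∀ t < m, IsCompOf (Y ∩ {z | z (Fin.last N) ∈ Set.Ioo a₀ a₁}) (Ls t) ∧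
        IsCompOf (Y ∩ {z | z (Fin.last N) ∈ Set.Ioo a₁ a₂}) (Us t) ∧
        JoinedBy Y (Ls t) (Us t)) ∧
      (∀ t, t + 1 < m → JoinedBy Y (Ls (t + 1)) (Us t))) := by
  have hCs : IsCompOf (Y ∩ Slab N a₀ a₁) C := hC
  have hC's : IsCompOf (Y ∩ Slab N a₁ a₂) C' := hC'
  constructor
  · intro hD
    have hreach : Reach Y a₀ a₁ a₂ C C' :=
      reach_of_sameComp hY h01 h12 hCs hC's hD
    exact (reach_to_chain h01 hCs hreach).2 hC's
  · rintro ⟨m, hm, Ls, Us, hL0, hUm, hall, hsucc⟩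
    obtain ⟨z₀, hz₀⟩ := hCs.nonempty
    have hz₀sub := hCs.subset hz₀
    have hz₀S : z₀ ∈ Y ∩ Slab N a₀ a₂ :=
      ⟨hz₀sub.1, hz₀sub.2.1, hz₀sub.2.2.trans h12⟩
    set D := connectedComponentIn (Y ∩ Slab N a₀ a₂) z₀ with hD
    have hclaim : ∀ t, t < m → Ls t ⊆ D ∧ Us t ⊆ D := by
      intro t
      induction t with
      | zero =>
          intro ht
          have hCS : C ⊆ Y ∩ Slab N a₀ a₂ :=
            hCs.subset.trans (inter_subset_inter_right Y (slab_mono le_rfl h12.le))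
          have hCD : C ⊆ D :=
            hCs.preconnected.subset_connectedComponentIn hz₀ hCS
          obtain ⟨hLs, hUs, hJ⟩ := hall 0 ht
          obtain ⟨T, hT, hTS, hLT, hUT⟩ := joined_subset h01 h12 hLs hUs hJ
          have hTD : T ⊆ D :=
            hT.subset_connectedComponentIn (hLT (hL0 ▸ hz₀)) hTS
          exact ⟨hL0 ▸ hCD, hUT.trans hTD⟩
      | succ t ih =>
          intro ht
          have htm : t < m := by omega
          have hUsD := (ih htm).2
          obtain ⟨y, hy⟩ := (hall t htm).2.1.nonempty
          have hDy : D = connectedComponentIn (Y ∩ Slab N a₀ a₂) y :=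
            connectedComponentIn_eq (hUsD hy)
          obtain ⟨T, hT, hTS, hLT, hUT⟩ :=
            joined_subset h01 h12 (hall (t + 1) ht).1 (hall t htm).2.1 (hsucc t ht)
          have hTD : T ⊆ D := by
            rw [hDy]; exact hT.subset_connectedComponentIn (hUT hy) hTS
          have hLD : Ls (t + 1) ⊆ D := hLT.trans hTD
          obtain ⟨x, hx⟩ := (hall (t + 1) ht).1.nonempty
          have hDx : D = connectedComponentIn (Y ∩ Slab N a₀ a₂) x :=
            connectedComponentIn_eq (hLD hx)
          obtain ⟨T', hT', hT'S, hLT', hUT'⟩ :=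
            joined_subset h01 h12 (hall (t + 1) ht).1 (hall (t + 1) ht).2.1
              (hall (t + 1) ht).2.2
          have hT'D : T' ⊆ D := by
            rw [hDx]; exact hT'.subset_connectedComponentIn (hLT' hx) hT'S
          exact ⟨hLD, hUT'.trans hT'D⟩
    refine ⟨D, ⟨z₀, hz₀S, hD⟩, ?_, ?_⟩
    · rw [← hL0]; exact (hclaim 0 (by omega)).1
    · rw [← hUm]; exact (hclaim (m - 1) (by omega)).2
end

section
/- Let H be a real Hilbert space, N ≥ 1, let φ : ℝ^N → H be a C^∞ function with compact support, and let ε > 0. Then there exist k ∈ ℕ, real-valued functions φ₁,…,φ_k ∈ C_c^∞(ℝ^N) and vectors ψ₁,…,ψ_k ∈ H such that for every x ∈ ℝ^N: ‖φ(x) − Σ_{i=1}^k φ_i(x) ψ_i‖_H ≤ ε and ‖Dφ(x) − Σ_{i=1}^k ψ_i ⊗ Dφ_i(x)‖ ≤ ε, where Dφ(x) ∈ L(ℝ^N, H) is the Fréchet derivative, ψ_i ⊗ Dφ_i(x) denotes the rank-one operator v ↦ (Dφ_i(x)v) ψ_i, and ‖·‖ is the operator norm on L(ℝ^N, H). -/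
open Set Metric Submodule RealInnerProductSpace

/-- A smooth compactly supported Hilbert-space-valued function can be
uniformly approximated, together with its Fréchet derivative, by finite sums of terms
`φᵢ(x) ψᵢ` with `φᵢ ∈ C_c^∞(ℝ^N)` real-valued and `ψᵢ ∈ H`. -/
theorem stmt_15 {N : ℕ} (hN : 1 ≤ N) {H : Type*} [NormedAddCommGroup H]
    [InnerProductSpace ℝ H] [CompleteSpace H]
    (φ : (Fin N → ℝ) → H) (hφ : ContDiff ℝ (⊤ : ℕ∞) φ) (hsupp : HasCompactSupport φ)
    (ε : ℝ) (hε : 0 < ε) :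
    ∃ (k : ℕ) (φs : Fin k → (Fin N → ℝ) → ℝ) (ψs : Fin k → H),
      (∀ i, ContDiff ℝ (⊤ : ℕ∞) (φs i) ∧ HasCompactSupport (φs i)) ∧
      (∀ x, ‖φ x - ∑ i, φs i x • ψs i‖ ≤ ε) ∧
      (∀ x, ‖fderiv ℝ φ x - ∑ i, (fderiv ℝ (φs i) x).smulRight (ψs i)‖ ≤ ε) := by
  classical
  have hN0 : (0:ℝ) < N := by exact_mod_cast Nat.lt_of_lt_of_le Nat.zero_lt_one hN
  have hN1 : (1:ℝ) ≤ N := by exact_mod_cast hN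
  set δ : ℝ := ε / N with hδdef
  have hδ : 0 < δ := div_pos hε hN0
  have hNδ : (N:ℝ) * δ = ε := by rw [hδdef]; field_simp [hN0.ne']
  have hδε : δ ≤ ε := div_le_self hε.le hN1
  have hcont : Continuous φ := hφ.continuous
  have hdφ : Differentiable ℝ φ := hφ.differentiable (by simp)
  have hDcont : Continuous (fderiv ℝ φ) := hφ.continuous_fderiv (by simp)
  have hDsupp : HasCompactSupport (fderiv ℝ φ) := hsupp.fderiv (𝕜 := ℝ)
  set e : Fin N → (Fin N → ℝ) := fun j => Pi.single j 1 with he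
  set g : Fin N → (Fin N → ℝ) → H := fun j x => fderiv ℝ φ x (e j) with hg
  have hgK : ∀ j, IsCompact (range (g j)) := by
    intro j
    have h1 : HasCompactSupport (g j) :=
      hDsupp.comp_left (g := fun T : (Fin N → ℝ) →L[ℝ] H => T (e j)) rfl
    exact h1.isCompact_range ((ContinuousLinearMap.apply ℝ H (e j)).continuous.comp hDcont)
  set K : Set H := range φ ∪ ⋃ j, range (g j) with hKdef
  have hK : IsCompact K := (hsupp.isCompact_range hcont).union (isCompact_iUnion hgK)
  have hcov : K ⊆ ⋃ y ∈ K, ball y δ := fun y hy => mem_biUnion hy (mem_ball_self hδ)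
  obtain ⟨t, htK, htf, htcov⟩ := hK.elim_finite_subcover_image (fun y _ => isOpen_ball) hcov
  set V : Submodule ℝ H := span ℝ t with hV
  haveI : FiniteDimensional ℝ V := FiniteDimensional.span_of_finite ℝ htf
  haveI : CompleteSpace V := FiniteDimensional.complete ℝ V
  set P := orthogonalProjection V with hP
  have hPle : ∀ u ∈ K, ‖u - (P u : H)‖ ≤ δ := by
    intro u hu
    obtain ⟨y, hyt, hyu⟩ := mem_iUnion₂.1 (htcov hu)
    calc ‖u - (P u : H)‖ = ⨅ x : V, ‖u - x‖ := by
          have h0 := starProjection_minimal (U := V) u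
          rw [starProjection_apply] at h0
          exact h0
      _ ≤ ‖u - (⟨y, subset_span hyt⟩ : V)‖ :=
          ciInf_le ⟨0, by rintro _ ⟨x, rfl⟩; exact norm_nonneg _⟩ _
      _ ≤ δ := by
          have := mem_ball.1 hyu
          rw [dist_eq_norm] at this
          exact this.le
  set b := stdOrthonormalBasis ℝ V with hb
  set k := Module.finrank ℝ V with hk
  have projA : ∀ u : H, ((P u : H)) = ∑ i, ⟪(b i : H), u⟫ • (b i : H) := by
    intro u
    have h2 : ∀ i, b.repr (P u) i = ⟪(b i : H), u⟫ := by
      intro i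
      rw [b.repr_apply_apply]
      have h3 := starProjection_inner_eq_zero (K := V) u (b i : H) (b i).2
      rw [starProjection_apply] at h3
      rw [inner_sub_left] at h3
      have h4 : ⟪(P u : H), (b i : H)⟫ = ⟪u, (b i : H)⟫ := by rw [sub_eq_zero] at h3; exact h3.symm
      rw [Submodule.coe_inner, real_inner_comm, h4, real_inner_comm]
    conv_lhs => rw [← b.sum_repr (P u)]
    push_cast
    exact Finset.sum_congr rfl fun i _ => by rw [h2]
  refine ⟨k, fun i x => ⟪(b i : H), φ x⟫, fun i => (b i : H), fun i => ⟨?_, ?_⟩, ?_, ?_⟩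
  · exact (contDiff_const (c := (b i : H))).inner ℝ hφ
  · exact hsupp.comp_left (g := fun u : H => ⟪(b i : H), u⟫) (inner_zero_right _)
  · intro x
    have hsum : ∑ i, ⟪(b i : H), φ x⟫ • (b i : H) = (P (φ x) : H) := (projA (φ x)).symm
    rw [hsum]
    exact (hPle (φ x) (Or.inl (mem_range_self x))).trans hδε
  · intro x
    -- derivative of each φs i
    have hfd : ∀ i : Fin k, fderiv ℝ (fun y => ⟪(b i : H), φ y⟫) x
        = (innerSL ℝ (b i : H)).comp (fderiv ℝ φ x) := by
      intro i
      exact ((innerSL ℝ (b i : H)).hasFDerivAt.comp x (hdφ x).hasFDerivAt).fderiv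
    refine ContinuousLinearMap.opNorm_le_bound _ hε.le fun v => ?_
    have hvdec : v = ∑ j, v j • e j := by
      ext i
      simp [he, Pi.single_apply, Finset.sum_apply, mul_ite]
    have h5 : fderiv ℝ φ x v = ∑ j, v j • g j x := by
      conv_lhs => rw [hvdec]
      simp [hg, map_sum, ContinuousLinearMap.map_smul]
    have hTv : (∑ i, (fderiv ℝ (fun y => ⟪(b i : H), φ y⟫) x).smulRight (b i : H)) v
        = (P (fderiv ℝ φ x v) : H) := by
      rw [projA]
      simp [hfd, ContinuousLinearMap.sum_apply]
    rw [ContinuousLinearMap.sub_apply, hTv]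
    have hP5 : ((P (fderiv ℝ φ x v) : H)) = ∑ j, v j • (P (g j x) : H) := by
      rw [h5]
      push_cast [map_sum, map_smul]
      rfl
    rw [hP5, h5, ← Finset.sum_sub_distrib]
    have : ∀ j : Fin N, v j • g j x - v j • (P (g j x) : H) = v j • (g j x - (P (g j x) : H)) :=
      fun j => (smul_sub _ _ _).symm
    simp_rw [this]
    calc ‖∑ j, v j • (g j x - (P (g j x) : H))‖
        ≤ ∑ j, ‖v j • (g j x - (P (g j x) : H))‖ := norm_sum_le _ _
      _ = ∑ j, ‖v j‖ * ‖g j x - (P (g j x) : H)‖ := by simp [norm_smul]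
      _ ≤ ∑ _j : Fin N, ‖v‖ * δ := by
          refine Finset.sum_le_sum fun j _ => ?_
          exact mul_le_mul (norm_le_pi_norm v j)
            (hPle _ (Or.inr (mem_iUnion.2 ⟨j, mem_range_self x⟩))) (norm_nonneg _) (norm_nonneg _)
      _ = ε * ‖v‖ := by
          rw [Finset.sum_const, Finset.card_univ, Fintype.card_fin, nsmul_eq_mul]
          rw [← hNδ]; ring
end

section
/- In the brush/unfolding setup, assume additionally that ω ⊆ B_{ℝ^N}(0,R₁) and Y ⊆ B_{ℝ^N}(0,R₁) × (0,L) for some R₁, L > 0, and that all scales satisfy l^n ≤ ε for some ε > 0. Let φ : ℝ^N → ℝ be Lipschitz with constant K, let ψ ∈ L²(Y), and define U(φ,ψ) : Ω^a → ℝ by U(φ,ψ)(x,y) = φ(x) ψ((x − x̄^n)/l^n, y) for (x,y) ∈ Y^n. Then ∫_W |τ(U(φ,ψ))(x,ξ,y) − χ_{ω_+}(x) φ(x) ψ(ξ,y)|² dx dξ dy ≤ (2 R₁ K ε)² λ_N(Ω') ‖ψ‖²_{L²(Y)}, where χ_{ω_+} is the indicator function of ω_+. -/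
/-! On the part of `Ω' × Y` lying over a base `ωⁿ`, write `x = x̄ⁿ + lⁿξ'` with `ξ' ∈ ω`.
The unfolded function is `φ(x̄ⁿ + lⁿξ) ψ(ξ,y)` and the comparison term is `φ(x̄ⁿ + lⁿξ') ψ(ξ,y)`;
the two arguments of `φ` are at distance `lⁿ|ξ - ξ'| ≤ 2R₁ε`, so the difference is at most
`2R₁Kε |ψ(ξ,y)|`. Off `ω₊` both terms vanish. Squaring and integrating over `Ω' × Y`, Tonelli
turns the integral of `ψ(ξ,y)²` into `λ(Ω') ‖ψ‖²_{L²(Y)}`. -/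

open MeasureTheory Set Bornology

noncomputable section

/-- The tooth `Y^n = {(c + s ξ, y) : (ξ,y) ∈ Y}`. -/
def tooth {N : ℕ} (Y : Set ((Fin N → ℝ) × ℝ)) (c : Fin N → ℝ) (s : ℝ) :
    Set ((Fin N → ℝ) × ℝ) :=
  (fun p : (Fin N → ℝ) × ℝ => (c + s • p.1, p.2)) '' Y

/-- The base `ω^n = c + s ω` of a tooth. -/
def toothBase {N : ℕ} (ω : Set (Fin N → ℝ)) (c : Fin N → ℝ) (s : ℝ) :
    Set (Fin N → ℝ) :=
  (fun ξ : Fin N → ℝ => c + s • ξ) '' ω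

/-- `T` is the unfolding `τφ` of `φ`. -/
def IsUnfolding {N M : ℕ} (ω : Set (Fin N → ℝ)) (xb : Fin M → Fin N → ℝ)
    (l : Fin M → ℝ) (φ : (Fin N → ℝ) × ℝ → ℝ)
    (T : (Fin N → ℝ) × ((Fin N → ℝ) × ℝ) → ℝ) : Prop :=
  (∀ n : Fin M, ∀ x ∈ toothBase ω (xb n) (l n),
      ∀ q : (Fin N → ℝ) × ℝ, T (x, q) = φ (xb n + l n • q.1, q.2)) ∧
  (∀ x ∉ ⋃ n, toothBase ω (xb n) (l n), ∀ q : (Fin N → ℝ) × ℝ, T (x, q) = 0)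

open scoped ENNReal NNReal

theorem LipschitzWith.abs_sub_le_of_norm_le {E : Type*} [SeminormedAddCommGroup E]
    [NormedSpace ℝ E] {K : ℝ≥0} {φ : E → ℝ} (hφ : LipschitzWith K φ) (c : E) {a b : E}
    {s ε R : ℝ} (hs : 0 ≤ s) (hsε : s ≤ ε) (ha : ‖a‖ ≤ R) (hb : ‖b‖ ≤ R) :
    |φ (c + s • a) - φ (c + s • b)| ≤ 2 * R * K * ε := by
  have hab : ‖a - b‖ ≤ 2 * R := (_root_.norm_sub_le a b).trans (by linarith)
  calc |φ (c + s • a) - φ (c + s • b)| = dist (φ (c + s • a)) (φ (c + s • b)) := rfl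
    _ ≤ K * dist (c + s • a) (c + s • b) := hφ.dist_le_mul _ _
    _ = K * (s * ‖a - b‖) := by
      rw [dist_add_left, dist_eq_norm, ← smul_sub, norm_smul, Real.norm_of_nonneg hs]
    _ ≤ K * (ε * (2 * R)) := by gcongr; linarith
    _ = 2 * R * K * ε := by ring

theorem MeasureTheory.setLIntegral_prod_fun_snd {α β : Type*} [MeasurableSpace α]
    [MeasurableSpace β] {μ : Measure α} {ν : Measure β} [SFinite μ] [SFinite ν]
    (s : Set α) {t : Set β} {g : β → ℝ≥0∞} (hg : AEMeasurable g (ν.restrict t)) :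
    ∫⁻ z in s ×ˢ t, g z.2 ∂μ.prod ν = μ s * ∫⁻ y in t, g y ∂ν := by
  rw [← Measure.prod_restrict, lintegral_prod _ hg.comp_snd]
  dsimp only
  rw [setLIntegral_const, mul_comm]

section Unfolding

variable {N M : ℕ} {ω : Set (Fin N → ℝ)} {Y : Set ((Fin N → ℝ) × ℝ)}
  {xb : Fin M → Fin N → ℝ} {l : Fin M → ℝ} {φ : (Fin N → ℝ) → ℝ}
  {ψ : (Fin N → ℝ) × ℝ → ℝ} {Uf : (Fin N → ℝ) × ℝ → ℝ}
  {T : (Fin N → ℝ) × ((Fin N → ℝ) × ℝ) → ℝ}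

theorem IsUnfolding.apply_of_mem_toothBase (hT : IsUnfolding ω xb l Uf T)
    (hUf : ∀ n : Fin M, ∀ z ∈ tooth Y (xb n) (l n),
      Uf z = φ z.1 * ψ ((l n)⁻¹ • (z.1 - xb n), z.2))
    {n : Fin M} (hln : l n ≠ 0) {x : Fin N → ℝ} (hx : x ∈ toothBase ω (xb n) (l n))
    {q : (Fin N → ℝ) × ℝ} (hq : q ∈ Y) :
    T (x, q) = φ (xb n + l n • q.1) * ψ q := by
  rw [hT.1 n x hx q, hUf n _ ⟨q, hq, rfl⟩, add_sub_cancel_left, inv_smul_smul₀ hln]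

theorem IsUnfolding.sq_sub_indicator_mul_le (hT : IsUnfolding ω xb l Uf T)
    (hUf : ∀ n : Fin M, ∀ z ∈ tooth Y (xb n) (l n),
      Uf z = φ z.1 * ψ ((l n)⁻¹ • (z.1 - xb n), z.2))
    {R ε : ℝ} {K : ℝ≥0} (hφ : LipschitzWith K φ) (hω : ∀ ξ ∈ ω, ‖ξ‖ ≤ R)
    (hY : ∀ q ∈ Y, ‖q.1‖ ≤ R) (hl : ∀ n, 0 < l n ∧ l n ≤ ε)
    (x : Fin N → ℝ) {q : (Fin N → ℝ) × ℝ} (hq : q ∈ Y) :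
    (T (x, q) - (⋃ n, toothBase ω (xb n) (l n)).indicator (fun _ => (1 : ℝ)) x * φ x * ψ q) ^ 2
      ≤ (2 * R * K * ε) ^ 2 * ψ q ^ 2 := by
  by_cases hx : x ∈ ⋃ n, toothBase ω (xb n) (l n)
  · obtain ⟨n, ξ, hξ, rfl⟩ := mem_iUnion.1 hx
    have hosc := hφ.abs_sub_le_of_norm_le (xb n) (hl n).1.le (hl n).2 (hY q hq) (hω ξ hξ)
    rw [indicator_of_mem hx, hT.apply_of_mem_toothBase hUf (hl n).1.ne' ⟨ξ, hξ, rfl⟩ hq,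
      one_mul, ← sub_mul, mul_pow]
    exact mul_le_mul_of_nonneg_right (sq_le_sq' (abs_le.1 hosc).1 (abs_le.1 hosc).2) (sq_nonneg _)
  · rw [indicator_of_notMem hx, hT.2 x hx q, zero_mul, zero_mul, sub_zero, zero_pow two_ne_zero]
    positivity

end Unfolding

theorem stmt_17_general {N M : ℕ}
    (Ω' : Set (Fin N → ℝ)) (hΩ'b : IsBounded Ω')
    (Y : Set ((Fin N → ℝ) × ℝ))
    (R₁ L : ℝ)
    (hYsub : Y ⊆ Metric.ball (0 : Fin N → ℝ) R₁ ×ˢ Set.Ioo (0 : ℝ) L)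
    (ω : Set (Fin N → ℝ))
    (hωsub : ω ⊆ Metric.ball (0 : Fin N → ℝ) R₁)
    (xb : Fin M → Fin N → ℝ) (l : Fin M → ℝ) (ε : ℝ)
    (hl : ∀ n, 0 < l n ∧ l n ≤ ε)
    (K : NNReal) (φ : (Fin N → ℝ) → ℝ) (hφ : LipschitzWith K φ)
    (ψ : (Fin N → ℝ) × ℝ → ℝ) (hψ : MemLp ψ 2 (volume.restrict Y))
    (Uf : (Fin N → ℝ) × ℝ → ℝ)
    (hUf : ∀ n : Fin M, ∀ z ∈ tooth Y (xb n) (l n),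
      Uf z = φ z.1 * ψ ((l n)⁻¹ • (z.1 - xb n), z.2))
    (T : (Fin N → ℝ) × ((Fin N → ℝ) × ℝ) → ℝ)
    (hT : IsUnfolding ω xb l Uf T) :
    ∫⁻ z in Ω' ×ˢ Y,
        ENNReal.ofReal
          ((T z -
            Set.indicator (⋃ n, toothBase ω (xb n) (l n)) (fun _ => (1 : ℝ)) z.1 *
              φ z.1 * ψ z.2) ^ 2)
      ≤ ENNReal.ofReal
          ((2 * R₁ * (K : ℝ) * ε) ^ 2 * (volume Ω').toReal * ∫ q in Y, ψ q ^ 2) := by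
  set C := 2 * R₁ * (K : ℝ) * ε
  have hψ2 : AEMeasurable (fun q => ENNReal.ofReal (ψ q ^ 2)) (volume.restrict Y) :=
    (hψ.aestronglyMeasurable.aemeasurable.pow_const 2).ennreal_ofReal
  rw [Measure.volume_eq_prod]
  calc _ ≤ ∫⁻ z in Ω' ×ˢ Y, ENNReal.ofReal (C ^ 2) * ENNReal.ofReal (ψ z.2 ^ 2)
          ∂volume.prod volume := by
        refine setLIntegral_mono_ae ?_ (ae_of_all _ ?_)
        · rw [← Measure.prod_restrict]
          exact hψ2.comp_snd.const_mul _
        · rintro ⟨x, q⟩ ⟨-, hq⟩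
          rw [← ENNReal.ofReal_mul (sq_nonneg C)]
          exact ENNReal.ofReal_le_ofReal <| hT.sq_sub_indicator_mul_le hUf hφ
            (fun ξ hξ => (mem_ball_zero_iff.1 (hωsub hξ)).le)
            (fun q hq => (mem_ball_zero_iff.1 (hYsub hq).1).le) hl x hq
    _ = ENNReal.ofReal (C ^ 2) * (volume Ω' * ENNReal.ofReal (∫ q in Y, ψ q ^ 2)) := by
        rw [lintegral_const_mul' _ _ ENNReal.ofReal_ne_top, setLIntegral_prod_fun_snd _ hψ2,
          ofReal_integral_eq_lintegral_ofReal hψ.integrable_sq (ae_of_all _ fun q => sq_nonneg _)]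
    _ = _ := by
        rw [ENNReal.ofReal_mul (by positivity), ENNReal.ofReal_mul (sq_nonneg C),
          ENNReal.ofReal_toReal hΩ'b.measure_lt_top.ne, mul_assoc]

/-- For the adapted test function `U(φ,ψ)(x,y) = φ(x)ψ((x−x̄ⁿ)/lⁿ, y)`
with `φ` Lipschitz of constant `K` and `ψ ∈ L²(Y)`, one has
`∫_W |τ(U(φ,ψ)) − χ_{ω₊} φ ψ|² ≤ (2R₁Kε)² λ_N(Ω') ‖ψ‖²_{L²(Y)}`. -/
theorem stmt_17 {N M : ℕ}
    (Ω' : Set (Fin N → ℝ)) (hΩ'o : IsOpen Ω') (hΩ'b : IsBounded Ω')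
    (Y : Set ((Fin N → ℝ) × ℝ)) (hYo : IsOpen Y) (hYne : Y.Nonempty)
    (R₁ L : ℝ) (hR₁ : 0 < R₁) (hL : 0 < L)
    (hYsub : Y ⊆ Metric.ball (0 : Fin N → ℝ) R₁ ×ˢ Set.Ioo (0 : ℝ) L)
    (ω : Set (Fin N → ℝ)) (hωm : MeasurableSet ω)
    (hωsub : ω ⊆ Metric.ball (0 : Fin N → ℝ) R₁) (hωvol : volume ω = 1)
    (xb : Fin M → Fin N → ℝ) (l : Fin M → ℝ) (ε : ℝ) (hε : 0 < ε)
    (hl : ∀ n, 0 < l n ∧ l n ≤ ε)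
    (hbase : ∀ n, toothBase ω (xb n) (l n) ⊆ Ω')
    (hbdisj : ∀ m n : Fin M, m ≠ n →
      Disjoint (toothBase ω (xb m) (l m)) (toothBase ω (xb n) (l n)))
    (htdisj : ∀ m n : Fin M, m ≠ n →
      Disjoint (tooth Y (xb m) (l m)) (tooth Y (xb n) (l n)))
    (K : NNReal) (φ : (Fin N → ℝ) → ℝ) (hφ : LipschitzWith K φ)
    (ψ : (Fin N → ℝ) × ℝ → ℝ) (hψ : MemLp ψ 2 (volume.restrict Y))
    (Uf : (Fin N → ℝ) × ℝ → ℝ)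
    (hUf : ∀ n : Fin M, ∀ z ∈ tooth Y (xb n) (l n),
      Uf z = φ z.1 * ψ ((l n)⁻¹ • (z.1 - xb n), z.2))
    (T : (Fin N → ℝ) × ((Fin N → ℝ) × ℝ) → ℝ)
    (hT : IsUnfolding ω xb l Uf T) :
    ∫⁻ z in Ω' ×ˢ Y,
        ENNReal.ofReal
          ((T z -
            Set.indicator (⋃ n, toothBase ω (xb n) (l n)) (fun _ => (1 : ℝ)) z.1 *
              φ z.1 * ψ z.2) ^ 2)
      ≤ ENNReal.ofReal
          ((2 * R₁ * (K : ℝ) * ε) ^ 2 * (volume Ω').toReal * ∫ q in Y, ψ q ^ 2) :=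
  stmt_17_general Ω' hΩ'b Y R₁ L hYsub ω hωsub xb l ε hl K φ hφ ψ hψ Uf hUf T hT

end
end

section
/- In the brush/unfolding family setup, assume additionally that ω ⊆ B_{ℝ^N}(0,R₁) and Y ⊆ B_{ℝ^N}(0,R₁) × (0,L) for some R₁, L > 0. Let φ : ℝ^N → ℝ be bounded and Lipschitz, ψ ∈ L²(Y), and for each ε define U_ε(φ,ψ) : Ω^a_ε → ℝ by U_ε(φ,ψ)(x,y) = φ(x) ψ((x − x̄^n_ε)/l^n_ε, y) for (x,y) ∈ Y^n_ε. Suppose (v_ε) ⊆ L²(W) satisfies χ_{ω_ε} v_ε = v_ε a.e. for every ε and v_ε converges weakly in L²(W) to some v as ε → 0. Then ∫_W v_ε(x,ξ,y) · τ_ε(U_ε(φ,ψ))(x,ξ,y) dx dξ dy → ∫_W v(x,ξ,y) φ(x) ψ(ξ,y) dx dξ dy as ε → 0. -/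
/-!
Write `w = φ ⊗ ψ` and `χ_ε` for the indicator of the union of the bases. On a base `ω^n_ε` the
unfolded test function is `φ (x̄^n + l^n ξ) ψ (ξ, y)`, and both `x` and `x̄^n + l^n ξ` lie in
`x̄^n + l^n B(0, R₁)`, so the Lipschitz bound gives `|τ_ε U_ε - χ_ε w| ≤ 2 K R₁ C ε |ψ|`.
Since `χ_ε v_ε = v_ε`, the integral `∫ v_ε τ_ε U_ε` equals `∫ v_ε g_ε` with
`g_ε = τ_ε U_ε - χ_ε w + w`, and `g_ε → w` strongly in `L²(W)`. Weakly convergent sequences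
are bounded (Banach–Steinhaus), so weak convergence of `v_ε` paired with strong convergence of
`g_ε` yields the limit `∫ v w`.
-/

open MeasureTheory Set Bornology Filter

noncomputable section

open scoped NNReal InnerProductSpace Topology

theorem tendsto_apply_of_tendsto_pointwise_of_tendsto {𝕜 E F : Type*} [NontriviallyNormedField 𝕜]
    [NormedAddCommGroup E] [NormedSpace 𝕜 E] [CompleteSpace E]
    [NormedAddCommGroup F] [NormedSpace 𝕜 F]
    {A : ℕ → E →L[𝕜] F} {L : E → F} {y : ℕ → E} {y₀ : E}
    (hA : ∀ x, Tendsto (fun k => A k x) atTop (𝓝 (L x))) (hy : Tendsto y atTop (𝓝 y₀)) :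
    Tendsto (fun k => A k (y k)) atTop (𝓝 (L y₀)) := by
  obtain ⟨C, hC⟩ := banach_steinhaus fun x => by
    obtain ⟨C, hC⟩ := (hA x).norm.bddAbove_range
    exact ⟨C, fun k => hC ⟨k, rfl⟩⟩
  have hdiff : Tendsto (fun k => A k (y k) - A k y₀) atTop (𝓝 0) := by
    refine squeeze_zero_norm (fun k => ?_) (by
      simpa using (tendsto_iff_norm_sub_tendsto_zero.1 hy).const_mul C)
    rw [← map_sub]
    exact (A k).le_of_opNorm_le (hC k) _
  simpa using hdiff.add (hA y₀)

theorem MeasureTheory.MemLp.inner_toLp_eq_integral {α : Type*} [MeasurableSpace α] {μ : Measure α}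
    {f : α → ℝ} (hf : MemLp f 2 μ) (x : Lp ℝ 2 μ) :
    ⟪hf.toLp f, x⟫_ℝ = ∫ a, f a * x a ∂μ := by
  rw [L2.inner_def]
  refine integral_congr_ae ?_
  filter_upwards [hf.coeFn_toLp] with a ha
  simp [ha, mul_comm]

theorem tendsto_integral_mul_of_weak_of_strong {α ι : Type*} [MeasurableSpace α]
    {μ : Measure α} {l : Filter ι} [l.IsCountablyGenerated] {f g : ι → α → ℝ} {f₀ g₀ : α → ℝ}
    (hf : ∀ᶠ i in l, MemLp (f i) 2 μ) (hg : ∀ᶠ i in l, MemLp (g i) 2 μ) (hg₀ : MemLp g₀ 2 μ)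
    (hweak : ∀ w, MemLp w 2 μ →
      Tendsto (fun i => ∫ a, f i a * w a ∂μ) l (𝓝 (∫ a, f₀ a * w a ∂μ)))
    (hstrong : Tendsto (fun i => eLpNorm (fun a => g i a - g₀ a) 2 μ) l (𝓝 0)) :
    Tendsto (fun i => ∫ a, f i a * g i a ∂μ) l (𝓝 (∫ a, f₀ a * g₀ a ∂μ)) := by
  refine tendsto_of_seq_tendsto fun u hu => ?_
  obtain ⟨n, hn⟩ := eventually_atTop.1 (hu.eventually (hf.and hg))
  rw [← tendsto_add_atTop_iff_nat n]
  have hfk k := (hn (k + n) le_add_self).1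
  have hgk k := (hn (k + n) le_add_self).2
  have hA (x : Lp ℝ 2 μ) : Tendsto (fun k => innerSL ℝ ((hfk k).toLp _) x) atTop
      (𝓝 (∫ a, f₀ a * x a ∂μ)) := by
    simp only [innerSL_apply_apply, MemLp.inner_toLp_eq_integral]
    exact ((hweak x (Lp.memLp x)).comp hu).comp (tendsto_add_atTop_nat n)
  have hy : Tendsto (fun k => (hgk k).toLp (g (u (k + n)))) atTop (𝓝 (hg₀.toLp g₀)) :=
    (Lp.tendsto_Lp_iff_tendsto_eLpNorm'' _ hgk _ hg₀).2
      ((hstrong.comp hu).comp (tendsto_add_atTop_nat n))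
  have hcoe {h : α → ℝ} (hh : MemLp h 2 μ) (f' : α → ℝ) :
      ∫ a, f' a * hh.toLp h a ∂μ = ∫ a, f' a * h a ∂μ :=
    integral_congr_ae (hh.coeFn_toLp.mono fun a ha => by simp only [ha])
  simpa only [innerSL_apply_apply, MemLp.inner_toLp_eq_integral, hcoe, Function.comp_apply] using
    tendsto_apply_of_tendsto_pointwise_of_tendsto hA hy

theorem MeasureTheory.MemLp.comp_snd_restrict_prod {α β E : Type*} [MeasurableSpace α]
    [MeasurableSpace β] [NormedAddCommGroup E] {μ : Measure α} {ν : Measure β} [SFinite μ]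
    [SFinite ν] {p : ENNReal} {s : Set α} {t : Set β} {f : β → E}
    (hf : MemLp f p (ν.restrict t)) (hs : μ s ≠ ⊤) :
    MemLp (fun z : α × β => f z.2) p ((μ.prod ν).restrict (s ×ˢ t)) := by
  have : IsFiniteMeasure (μ.restrict s) := isFiniteMeasure_restrict.2 hs
  rw [← Measure.prod_restrict]
  exact hf.comp_snd _

theorem tendsto_eLpNorm_zero_of_ae_le_mul {α ι E F : Type*} [MeasurableSpace α]
    [NormedAddCommGroup E] [NormedAddCommGroup F] {μ : Measure α} {l : Filter ι} {p : ENNReal}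
    {d : ι → α → E} {c : ι → ℝ} {g : α → F} (hg : eLpNorm g p μ ≠ ⊤) (hc : Tendsto c l (𝓝 0))
    (hd : ∀ᶠ i in l, ∀ᵐ a ∂μ, ‖d i a‖ ≤ c i * ‖g a‖) :
    Tendsto (fun i => eLpNorm (d i) p μ) l (𝓝 0) := by
  refine tendsto_of_tendsto_of_tendsto_of_le_of_le' tendsto_const_nhds
    (by simpa using
      ENNReal.Tendsto.mul_const (ENNReal.tendsto_ofReal hc) (Or.inr hg))
    (Eventually.of_forall fun _ => zero_le)
    (hd.mono fun i hi => eLpNorm_le_mul_eLpNorm_of_ae_le_mul hi p)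

section Unfolding

variable {N M : ℕ} {ω : Set (Fin N → ℝ)} {xb : Fin M → Fin N → ℝ} {l : Fin M → ℝ}

theorem toothBase_eq_preimage (c : Fin N → ℝ) {s : ℝ} (hs : s ≠ 0) :
    toothBase ω c s = (fun x : Fin N → ℝ => s⁻¹ • (x - c)) ⁻¹' ω := by
  ext x
  constructor
  · rintro ⟨ξ, hξ, rfl⟩
    simpa [smul_smul, inv_mul_cancel₀ hs] using hξ
  · intro hx
    exact ⟨s⁻¹ • (x - c), hx, by simp [smul_smul, mul_inv_cancel₀ hs]⟩

theorem measurableSet_toothBase (hω : MeasurableSet ω) (c : Fin N → ℝ) {s : ℝ} (hs : s ≠ 0) :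
    MeasurableSet (toothBase ω c s) := by
  rw [toothBase_eq_preimage c hs]
  exact (by fun_prop : Measurable fun x : Fin N → ℝ => s⁻¹ • (x - c)) hω

theorem dist_le_of_mem_toothBase {R s : ℝ} {c ξ x : Fin N → ℝ}
    (hω : ω ⊆ Metric.ball 0 R) (hs : 0 ≤ s) (hξ : ξ ∈ Metric.ball 0 R)
    (hx : x ∈ toothBase ω c s) : dist (c + s • ξ) x ≤ 2 * R * s := by
  obtain ⟨ξ', hξ', rfl⟩ := hx
  have hξξ' : dist ξ ξ' < 2 * R := by
    have := dist_triangle_right ξ ξ' 0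
    rw [Metric.mem_ball] at hξ
    linarith [Metric.mem_ball.1 (hω hξ')]
  rw [dist_add_left, dist_smul₀, Real.norm_eq_abs, abs_of_nonneg hs, mul_comm]
  exact mul_le_mul_of_nonneg_right hξξ'.le hs

variable {Y : Set ((Fin N → ℝ) × ℝ)} {Φ : (Fin N → ℝ) × ℝ → ℝ}
  {T : (Fin N → ℝ) × ((Fin N → ℝ) × ℝ) → ℝ} {φ : (Fin N → ℝ) → ℝ} {ψ : (Fin N → ℝ) × ℝ → ℝ}
  {K : ℝ≥0} {R s : ℝ}

theorem IsUnfolding.aestronglyMeasurable {μ : Measure ((Fin N → ℝ) × ((Fin N → ℝ) × ℝ))}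
    (hT : IsUnfolding ω xb l Φ T) (hbase : ∀ n, MeasurableSet (toothBase ω (xb n) (l n)))
    (hΦ : ∀ n, AEStronglyMeasurable (fun z => Φ (xb n + l n • z.2.1, z.2.2)) μ) :
    AEStronglyMeasurable T μ := by
  set S := ⋃ n, toothBase ω (xb n) (l n)
  have hcover : (⋃ n, toothBase ω (xb n) (l n) ×ˢ univ) ∪ Sᶜ ×ˢ univ =
      (univ : Set ((Fin N → ℝ) × ((Fin N → ℝ) × ℝ))) := by
    rw [← iUnion_prod_const, ← union_prod, union_compl_self, univ_prod_univ]
  rw [← Measure.restrict_univ (μ := μ), ← hcover, aestronglyMeasurable_union_iff,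
    aestronglyMeasurable_iUnion_iff]
  refine ⟨fun n => (hΦ n).restrict.congr ?_, (aestronglyMeasurable_const (b := (0 : ℝ))).congr ?_⟩
  · filter_upwards [ae_restrict_mem ((hbase n).prod MeasurableSet.univ)] with z hz
    exact (hT.1 n z.1 hz.1 z.2).symm
  · filter_upwards [ae_restrict_mem ((MeasurableSet.iUnion hbase).compl.prod MeasurableSet.univ)]
      with z hz
    exact (hT.2 z.1 hz.1 z.2).symm

theorem IsUnfolding.abs_sub_indicator_mul_le (hT : IsUnfolding ω xb l Φ T)
    (hΦ : ∀ n, ∀ p ∈ Y, Φ (xb n + l n • p.1, p.2) = φ (xb n + l n • p.1) * ψ p)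
    (hφ : LipschitzWith K φ) (hω : ω ⊆ Metric.ball 0 R) (hR : 0 ≤ R) (hs : 0 ≤ s)
    (hl : ∀ n, 0 ≤ l n ∧ l n ≤ s) {z : (Fin N → ℝ) × ((Fin N → ℝ) × ℝ)}
    (hzY : z.2 ∈ Y) (hzR : z.2.1 ∈ Metric.ball 0 R) :
    |T z - Set.indicator (⋃ n, toothBase ω (xb n) (l n)) (fun _ => (1 : ℝ)) z.1 *
      (φ z.1 * ψ z.2)| ≤ K * (2 * R * s) * |ψ z.2| := by
  by_cases hx : z.1 ∈ ⋃ n, toothBase ω (xb n) (l n)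
  · obtain ⟨n, hn⟩ := mem_iUnion.1 hx
    rw [show T z = _ from hT.1 n z.1 hn z.2, hΦ n z.2 hzY, indicator_of_mem hx, one_mul,
      ← sub_mul, abs_mul, ← Real.dist_eq]
    gcongr
    calc dist (φ (xb n + l n • z.2.1)) (φ z.1) ≤ K * dist (xb n + l n • z.2.1) z.1 :=
          hφ.dist_le_mul _ _
      _ ≤ K * (2 * R * s) := by
          gcongr
          exact (dist_le_of_mem_toothBase hω (hl n).1 hzR hn).trans
            (mul_le_mul_of_nonneg_left (hl n).2 (by positivity))
  · rw [show T z = 0 from hT.2 z.1 hx z.2, indicator_of_notMem hx]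
    simp only [zero_mul, sub_zero, abs_zero]
    positivity

theorem IsUnfolding.ae_norm_sub_indicator_mul_le
    {μ : Measure ((Fin N → ℝ) × ((Fin N → ℝ) × ℝ))} (hT : IsUnfolding ω xb l Φ T)
    (hΦ : ∀ n, ∀ p ∈ Y, Φ (xb n + l n • p.1, p.2) = φ (xb n + l n • p.1) * ψ p)
    (hφ : LipschitzWith K φ) (hω : ω ⊆ Metric.ball 0 R) (hR : 0 ≤ R) (hs : 0 ≤ s)
    (hl : ∀ n, 0 ≤ l n ∧ l n ≤ s) (hμ : ∀ᵐ z ∂μ, z.2 ∈ Y ∧ z.2.1 ∈ Metric.ball 0 R) :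
    ∀ᵐ z ∂μ, ‖T z - Set.indicator (⋃ n, toothBase ω (xb n) (l n)) (fun _ => (1 : ℝ)) z.1 *
      (φ z.1 * ψ z.2)‖ ≤ K * (2 * R * s) * ‖ψ z.2‖ :=
  hμ.mono fun _ hz => by
    simpa only [Real.norm_eq_abs] using hT.abs_sub_indicator_mul_le hΦ hφ hω hR hs hl hz.1 hz.2

theorem IsUnfolding.memLp_sub_indicator_mul
    {μ : Measure ((Fin N → ℝ) × ((Fin N → ℝ) × ℝ))} (hT : IsUnfolding ω xb l Φ T)
    (hΦ : ∀ n, ∀ p ∈ Y, Φ (xb n + l n • p.1, p.2) = φ (xb n + l n • p.1) * ψ p)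
    (hφ : LipschitzWith K φ) (hωm : MeasurableSet ω) (hω : ω ⊆ Metric.ball 0 R) (hR : 0 ≤ R)
    (hs : 0 ≤ s) (hl : ∀ n, 0 < l n ∧ l n ≤ s) (hψ : MemLp (fun z => ψ z.2) 2 μ)
    (hμ : ∀ᵐ z ∂μ, z.2 ∈ Y ∧ z.2.1 ∈ Metric.ball 0 R) :
    MemLp (fun z => T z - Set.indicator (⋃ n, toothBase ω (xb n) (l n)) (fun _ => (1 : ℝ)) z.1 *
      (φ z.1 * ψ z.2)) 2 μ := by
  have hbase n := measurableSet_toothBase hωm (xb n) (hl n).1.ne'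
  have hTm := hT.aestronglyMeasurable hbase fun n =>
    ((hφ.continuous.comp (by fun_prop)).aestronglyMeasurable.mul hψ.1).congr
      (hμ.mono fun z hz => (hΦ n z.2 hz.1).symm)
  have hχ : Measurable fun z : (Fin N → ℝ) × ((Fin N → ℝ) × ℝ) =>
      Set.indicator (⋃ n, toothBase ω (xb n) (l n)) (fun _ => (1 : ℝ)) z.1 :=
    (measurable_const.indicator (MeasurableSet.iUnion hbase)).comp measurable_fst
  have hw := (hφ.continuous.comp continuous_fst).aestronglyMeasurable.mul hψ.1
  exact hψ.of_le_mul (hTm.sub (hχ.aestronglyMeasurable.mul hw))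
    (hT.ae_norm_sub_indicator_mul_le hΦ hφ hω hR hs (fun n => ⟨(hl n).1.le, (hl n).2⟩) hμ)

end Unfolding

theorem stmt_18_general {N : ℕ}
    (Ω' : Set (Fin N → ℝ)) (hΩ'o : IsOpen Ω') (hΩ'b : IsBounded Ω')
    (Y : Set ((Fin N → ℝ) × ℝ)) (hYo : IsOpen Y)
    (R₁ L : ℝ) (hR₁ : 0 < R₁)
    (hYsub : Y ⊆ Metric.ball (0 : Fin N → ℝ) R₁ ×ˢ Set.Ioo (0 : ℝ) L)
    (ω : Set (Fin N → ℝ)) (hωm : MeasurableSet ω)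
    (hωsub : ω ⊆ Metric.ball (0 : Fin N → ℝ) R₁)
    (C : ℝ) (hC : 0 < C)
    (NT : ℝ → ℕ) (xb : (ε : ℝ) → Fin (NT ε) → Fin N → ℝ)
    (l : (ε : ℝ) → Fin (NT ε) → ℝ)
    (hl : ∀ ε ∈ Set.Ioc (0 : ℝ) 1, ∀ n, 0 < l ε n ∧ l ε n ≤ C * ε)
    (K : NNReal) (Cφ : ℝ) (φ : (Fin N → ℝ) → ℝ)
    (hφlip : LipschitzWith K φ) (hφbdd : ∀ x, |φ x| ≤ Cφ)
    (ψ : (Fin N → ℝ) × ℝ → ℝ) (hψ : MemLp ψ 2 (volume.restrict Y))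
    (Uf : ℝ → (Fin N → ℝ) × ℝ → ℝ)
    (hUf : ∀ ε ∈ Set.Ioc (0 : ℝ) 1, ∀ n, ∀ z ∈ tooth Y (xb ε n) (l ε n),
      Uf ε z = φ z.1 * ψ ((l ε n)⁻¹ • (z.1 - xb ε n), z.2))
    (T : ℝ → (Fin N → ℝ) × ((Fin N → ℝ) × ℝ) → ℝ)
    (hT : ∀ ε ∈ Set.Ioc (0 : ℝ) 1, IsUnfolding ω (xb ε) (l ε) (Uf ε) (T ε))
    (v : ℝ → (Fin N → ℝ) × ((Fin N → ℝ) × ℝ) → ℝ)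
    (vlim : (Fin N → ℝ) × ((Fin N → ℝ) × ℝ) → ℝ)
    (hv : ∀ ε ∈ Set.Ioc (0 : ℝ) 1, MemLp (v ε) 2 (volume.restrict (Ω' ×ˢ Y)))
    (hχv : ∀ ε ∈ Set.Ioc (0 : ℝ) 1,
      (fun z : (Fin N → ℝ) × ((Fin N → ℝ) × ℝ) =>
        Set.indicator (⋃ n, toothBase ω (xb ε n) (l ε n)) (fun _ => (1 : ℝ)) z.1 * v ε z)
        =ᵐ[volume.restrict (Ω' ×ˢ Y)] v ε)
    (hweak : ∀ w : (Fin N → ℝ) × ((Fin N → ℝ) × ℝ) → ℝ,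
      MemLp w 2 (volume.restrict (Ω' ×ˢ Y)) →
      Tendsto (fun ε => ∫ z in Ω' ×ˢ Y, v ε z * w z)
        (nhdsWithin 0 (Set.Ioc (0 : ℝ) 1))
        (nhds (∫ z in Ω' ×ˢ Y, vlim z * w z))) :
    Tendsto (fun ε => ∫ z in Ω' ×ˢ Y, v ε z * T ε z)
      (nhdsWithin 0 (Set.Ioc (0 : ℝ) 1))
      (nhds (∫ z in Ω' ×ˢ Y, vlim z * (φ z.1 * ψ z.2))) := by
  set μ := volume.restrict (Ω' ×ˢ Y)
  have hψμ : MemLp (fun z : (Fin N → ℝ) × ((Fin N → ℝ) × ℝ) => ψ z.2) 2 μ :=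
    hψ.comp_snd_restrict_prod hΩ'b.measure_lt_top.ne
  have hw : MemLp (fun z : (Fin N → ℝ) × ((Fin N → ℝ) × ℝ) => φ z.1 * ψ z.2) 2 μ :=
    hψμ.of_le_mul (c := Cφ) ((hφlip.continuous.comp continuous_fst).aestronglyMeasurable.mul
      hψμ.1) (ae_of_all _ fun z => by rw [norm_mul]; gcongr; exact hφbdd z.1)
  have hμY : ∀ᵐ z ∂μ, z.2 ∈ Y ∧ z.2.1 ∈ Metric.ball 0 R₁ :=
    (ae_restrict_mem (hΩ'o.measurableSet.prod hYo.measurableSet)).mono fun z hz =>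
      ⟨hz.2, (hYsub hz.2).1⟩
  have hUf' : ∀ ε ∈ Set.Ioc (0 : ℝ) 1, ∀ n, ∀ p ∈ Y,
      Uf ε (xb ε n + l ε n • p.1, p.2) = φ (xb ε n + l ε n • p.1) * ψ p := fun ε hε n p hp => by
    rw [hUf ε hε n _ ⟨p, hp, rfl⟩, add_sub_cancel_left, inv_smul_smul₀ (hl ε hε n).1.ne']
  have hc : Tendsto (fun ε : ℝ => K * (2 * R₁ * (C * ε))) (𝓝[Set.Ioc 0 1] 0) (𝓝 0) := by
    simpa using tendsto_nhdsWithin_of_tendsto_nhds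
      ((by fun_prop : Continuous fun ε : ℝ => K * (2 * R₁ * (C * ε))).tendsto 0)
  have hd0 := tendsto_eLpNorm_zero_of_ae_le_mul hψμ.eLpNorm_ne_top hc
    (eventually_nhdsWithin_of_forall fun ε hε => (hT ε hε).ae_norm_sub_indicator_mul_le
      (hUf' ε hε) hφlip hωsub hR₁.le (mul_nonneg hC.le hε.1.le)
      (fun n => ⟨(hl ε hε n).1.le, (hl ε hε n).2⟩) hμY)
  refine (tendsto_integral_mul_of_weak_of_strong (eventually_nhdsWithin_of_forall hv)
    (eventually_nhdsWithin_of_forall fun ε hε => ((hT ε hε).memLp_sub_indicator_mul (hUf' ε hε)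
      hφlip hωm hωsub hR₁.le (mul_nonneg hC.le hε.1.le) (hl ε hε) hψμ hμY).add hw) hw hweak
    (by simpa only [Pi.add_apply, add_sub_cancel_right] using hd0)).congr'
    (eventually_nhdsWithin_of_forall fun ε hε => integral_congr_ae ?_)
  filter_upwards [hχv ε hε] with z hz
  rw [Pi.add_apply]
  linear_combination (-(φ z.1 * ψ z.2)) * hz

/-- If `v_ε ⇀ v` weakly in `L²(W)` with `χ_{ω_ε} v_ε = v_ε`, then
`∫_W v_ε τ_ε(U_ε(φ,ψ)) → ∫_W v φ ψ` as `ε → 0`, for `φ` bounded Lipschitz and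
`ψ ∈ L²(Y)`. -/
theorem stmt_18 {N : ℕ}
    (Ω' : Set (Fin N → ℝ)) (hΩ'o : IsOpen Ω') (hΩ'b : IsBounded Ω')
    (Y : Set ((Fin N → ℝ) × ℝ)) (hYo : IsOpen Y) (hYne : Y.Nonempty)
    (hYpos : ∀ p ∈ Y, 0 < p.2)
    (R₁ L : ℝ) (hR₁ : 0 < R₁) (hL : 0 < L)
    (hYsub : Y ⊆ Metric.ball (0 : Fin N → ℝ) R₁ ×ˢ Set.Ioo (0 : ℝ) L)
    (ω : Set (Fin N → ℝ)) (hωm : MeasurableSet ω)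
    (hωsub : ω ⊆ Metric.ball (0 : Fin N → ℝ) R₁) (hωvol : volume ω = 1)
    (C : ℝ) (hC : 0 < C)
    (NT : ℝ → ℕ) (xb : (ε : ℝ) → Fin (NT ε) → Fin N → ℝ)
    (l : (ε : ℝ) → Fin (NT ε) → ℝ)
    (hl : ∀ ε ∈ Set.Ioc (0 : ℝ) 1, ∀ n, 0 < l ε n ∧ l ε n ≤ C * ε)
    (hbase : ∀ ε ∈ Set.Ioc (0 : ℝ) 1, ∀ n, toothBase ω (xb ε n) (l ε n) ⊆ Ω')
    (hbdisj : ∀ ε ∈ Set.Ioc (0 : ℝ) 1, ∀ m n, m ≠ n →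
      Disjoint (toothBase ω (xb ε m) (l ε m)) (toothBase ω (xb ε n) (l ε n)))
    (htdisj : ∀ ε ∈ Set.Ioc (0 : ℝ) 1, ∀ m n, m ≠ n →
      Disjoint (tooth Y (xb ε m) (l ε m)) (tooth Y (xb ε n) (l ε n)))
    (K : NNReal) (Cφ : ℝ) (φ : (Fin N → ℝ) → ℝ)
    (hφlip : LipschitzWith K φ) (hφbdd : ∀ x, |φ x| ≤ Cφ)
    (ψ : (Fin N → ℝ) × ℝ → ℝ) (hψ : MemLp ψ 2 (volume.restrict Y))
    (Uf : ℝ → (Fin N → ℝ) × ℝ → ℝ)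
    (hUf : ∀ ε ∈ Set.Ioc (0 : ℝ) 1, ∀ n, ∀ z ∈ tooth Y (xb ε n) (l ε n),
      Uf ε z = φ z.1 * ψ ((l ε n)⁻¹ • (z.1 - xb ε n), z.2))
    (T : ℝ → (Fin N → ℝ) × ((Fin N → ℝ) × ℝ) → ℝ)
    (hT : ∀ ε ∈ Set.Ioc (0 : ℝ) 1, IsUnfolding ω (xb ε) (l ε) (Uf ε) (T ε))
    (v : ℝ → (Fin N → ℝ) × ((Fin N → ℝ) × ℝ) → ℝ)
    (vlim : (Fin N → ℝ) × ((Fin N → ℝ) × ℝ) → ℝ)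
    (hv : ∀ ε ∈ Set.Ioc (0 : ℝ) 1, MemLp (v ε) 2 (volume.restrict (Ω' ×ˢ Y)))
    (hχv : ∀ ε ∈ Set.Ioc (0 : ℝ) 1,
      (fun z : (Fin N → ℝ) × ((Fin N → ℝ) × ℝ) =>
        Set.indicator (⋃ n, toothBase ω (xb ε n) (l ε n)) (fun _ => (1 : ℝ)) z.1 * v ε z)
        =ᵐ[volume.restrict (Ω' ×ˢ Y)] v ε)
    (hvlim : MemLp vlim 2 (volume.restrict (Ω' ×ˢ Y)))
    (hweak : ∀ w : (Fin N → ℝ) × ((Fin N → ℝ) × ℝ) → ℝ,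
      MemLp w 2 (volume.restrict (Ω' ×ˢ Y)) →
      Tendsto (fun ε => ∫ z in Ω' ×ˢ Y, v ε z * w z)
        (nhdsWithin 0 (Set.Ioc (0 : ℝ) 1))
        (nhds (∫ z in Ω' ×ˢ Y, vlim z * w z))) :
    Tendsto (fun ε => ∫ z in Ω' ×ˢ Y, v ε z * T ε z)
      (nhdsWithin 0 (Set.Ioc (0 : ℝ) 1))
      (nhds (∫ z in Ω' ×ˢ Y, vlim z * (φ z.1 * ψ z.2))) :=
  stmt_18_general Ω' hΩ'o hΩ'b Y hYo R₁ L hR₁ hYsub ω hωm hωsub C hC NT xb l hl K Cφ φ hφlip hφbdd ψ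
    hψ Uf hUf T hT v vlim hv hχv hweak
end
end
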